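/- arXiv:2108.04587 — 9 statements merged into one kernel-verified Lean document; each statement's English description precedes it below -/
import Mathlib

section
/- Let g, h : {0,1}^n → {0,1} each be computable by a decision tree of depth at most d, and suppose g and h are not equal as functions. Then the number of points x ∈ {0,1}^n with g(x) ≠ h(x) is at least 2^{n−d}; equivalently, for uniformly random x, Pr[g(x) ≠ h(x)] ≥ 1/2^d. -/
/-- Binary decision trees over `n` Boolean variables. -/
inductive DTree (n : ℕ) : Type where
  | leaf : Bool → DTree n
  | node : Fin n → DTree n → DTree n → DTree n

namespace DTree

/-- Evaluation of a decision tree on an input `x`: at a node labeled `i`,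
go right if `x i = true` and left otherwise. -/
def eval {n : ℕ} : DTree n → (Fin n → Bool) → Bool
  | leaf b, _ => b
  | node i t0 t1, x => if x i then eval t1 x else eval t0 x

/-- Depth of a decision tree: maximum number of edges on a root-to-leaf path. -/
def depth {n : ℕ} : DTree n → ℕ
  | leaf _ => 0
  | node _ t0 t1 => 1 + max (depth t0) (depth t1)

end DTree

namespace DTAux

open Finset

variable {n : ℕ}

def sgn (x : Fin n → Bool) (i : Fin n) : ℤ := if x i then -1 else 1

def chi (S : Finset (Fin n)) (x : Fin n → Bool) : ℤ := ∏ i ∈ S, sgn x i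

def ind (b : Bool) : ℤ := if b then 1 else 0

lemma sgn_sq (x : Fin n → Bool) (i : Fin n) : sgn x i * sgn x i = 1 := by
  cases h : x i <;> simp [sgn, h]

lemma chi_flip (i : Fin n) (S : Finset (Fin n)) (x : Fin n → Bool) :
    chi (if i ∈ S then S.erase i else insert i S) x = sgn x i * chi S x := by
  by_cases hi : i ∈ S
  · simp only [hi, if_true]
    have h1 : chi S x = sgn x i * chi (S.erase i) x := (Finset.mul_prod_erase S _ hi).symm
    rw [h1, ← mul_assoc, sgn_sq, one_mul]
  · simp only [hi, if_false]
    exact Finset.prod_insert hi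

lemma chi_update (i : Fin n) (S : Finset (Fin n)) (hi : i ∈ S) (x : Fin n → Bool) :
    chi S (Function.update x i (!x i)) = - chi S x := by
  have h1 : chi S (Function.update x i (!x i))
      = sgn (Function.update x i (!x i)) i * ∏ j ∈ S.erase i, sgn (Function.update x i (!x i)) j :=
    (Finset.mul_prod_erase S _ hi).symm
  have h2 : chi S x = sgn x i * ∏ j ∈ S.erase i, sgn x j :=
    (Finset.mul_prod_erase S _ hi).symm
  have h3 : ∀ j ∈ S.erase i, sgn (Function.update x i (!x i)) j = sgn x j := by
    intro j hj
    have hne : j ≠ i := Finset.ne_of_mem_erase hj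
    simp [sgn, Function.update_of_ne hne]
  have h4 : sgn (Function.update x i (!x i)) i = - sgn x i := by
    cases h : x i <;> simp [sgn, h]
  rw [h1, h4, Finset.prod_congr rfl h3, h2]
  ring

def flipE (i : Fin n) : (Fin n → Bool) ≃ (Fin n → Bool) where
  toFun x := Function.update x i (!x i)
  invFun x := Function.update x i (!x i)
  left_inv x := by
    funext j
    by_cases h : j = i
    · subst h; simp [Function.update]
    · simp [Function.update_of_ne h]
  right_inv x := by
    funext j
    by_cases h : j = i
    · subst h; simp [Function.update]
    · simp [Function.update_of_ne h]

lemma sum_chi (S : Finset (Fin n)) :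
    ∑ x : Fin n → Bool, chi S x = if S = ∅ then (2 : ℤ)^n else 0 := by
  by_cases hS : S = ∅
  · subst hS
    simp [chi, Fintype.card_fun]
  · simp only [hS, if_false]
    obtain ⟨i, hi⟩ := Finset.nonempty_iff_ne_empty.mpr hS
    have h1 : ∑ x : Fin n → Bool, chi S x = ∑ x : Fin n → Bool, chi S (flipE i x) :=
      (Equiv.sum_comp (flipE i) (chi S)).symm
    have h2 : ∀ x, chi S (flipE i x) = - chi S x := fun x => chi_update i S hi x
    simp only [h2, Finset.sum_neg_distrib] at h1
    linarith

lemma gran (t : DTree n) : ∀ d, t.depth ≤ d → ∀ S : Finset (Fin n),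
    (2:ℤ)^(n-d) ∣ ∑ x : Fin n → Bool, ind (t.eval x) * chi S x := by
  induction t with
  | leaf b =>
    intro d _ S
    have : ∑ x : Fin n → Bool, ind ((DTree.leaf b : DTree n).eval x) * chi S x
        = ind b * ∑ x : Fin n → Bool, chi S x := by
      rw [Finset.mul_sum]
      refine Finset.sum_congr rfl fun x _ => ?_
      simp [DTree.eval]
    rw [this, sum_chi]
    by_cases hS : S = ∅
    · simp only [hS, if_true]
      exact Dvd.dvd.mul_left (pow_dvd_pow 2 (Nat.sub_le n d)) _
    · simp [hS]
  | node i t0 t1 ih0 ih1 =>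
    intro d hd S
    have hd1 : 1 ≤ d := by
      have := hd; simp only [DTree.depth] at this; omega
    have hd0 : t0.depth ≤ d - 1 := by
      have := hd; simp only [DTree.depth] at this; omega
    have hd1' : t1.depth ≤ d - 1 := by
      have := hd; simp only [DTree.depth] at this; omega
    set S' := if i ∈ S then S.erase i else insert i S with hS'
    have key : 2 * ∑ x : Fin n → Bool, ind ((DTree.node i t0 t1).eval x) * chi S x
        = ((∑ x : Fin n → Bool, ind (t1.eval x) * chi S x)
            - ∑ x : Fin n → Bool, ind (t1.eval x) * chi S' x)
          + ((∑ x : Fin n → Bool, ind (t0.eval x) * chi S x)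
            + ∑ x : Fin n → Bool, ind (t0.eval x) * chi S' x) := by
      rw [Finset.mul_sum, ← Finset.sum_sub_distrib, ← Finset.sum_add_distrib,
        ← Finset.sum_add_distrib]
      refine Finset.sum_congr rfl fun x _ => ?_
      have hfl : chi S' x = sgn x i * chi S x := chi_flip i S x
      simp only [DTree.eval]
      cases h : x i
      · simp only [h, if_false, Bool.false_eq_true]
        rw [hfl]
        simp only [sgn, h, if_false, Bool.false_eq_true, one_mul]
        ring
      · simp only [h, if_true]
        rw [hfl]
        simp only [sgn, h, if_true]
        ring
    by_cases hn : n ≤ d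
    · have : n - d = 0 := by omega
      rw [this]; simp
    · have hdvd2 : (2:ℤ)^(n-(d-1)) ∣ 2 * ∑ x : Fin n → Bool,
          ind ((DTree.node i t0 t1).eval x) * chi S x := by
        rw [key]
        exact dvd_add (dvd_sub (ih1 (d-1) hd1' S) (ih1 (d-1) hd1' S'))
          (dvd_add (ih0 (d-1) hd0 S) (ih0 (d-1) hd0 S'))
      have he : n - (d - 1) = (n - d) + 1 := by omega
      rw [he, pow_succ] at hdvd2
      have h2 : (2:ℤ) * (2:ℤ)^(n-d) ∣ 2 * ∑ x : Fin n → Bool,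
          ind ((DTree.node i t0 t1).eval x) * chi S x := by
        rwa [mul_comm] at hdvd2
      exact (mul_dvd_mul_iff_left (two_ne_zero)).mp h2

lemma orth (x y : Fin n → Bool) :
    ∑ S : Finset (Fin n), chi S x * chi S y = if x = y then (2:ℤ)^n else 0 := by
  have h1 : ∀ S : Finset (Fin n), chi S x * chi S y = ∏ i ∈ S, (sgn x i * sgn y i) := by
    intro S; rw [chi, chi, ← Finset.prod_mul_distrib]
  simp only [h1]
  have h2 : ∏ i : Fin n, (sgn x i * sgn y i + 1)
      = ∑ S ∈ (Finset.univ : Finset (Fin n)).powerset,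
          (∏ i ∈ S, (sgn x i * sgn y i)) * ∏ i ∈ Finset.univ \ S, (1:ℤ) := by
    exact Finset.prod_add _ _ _
  simp only [Finset.prod_const_one, mul_one, Finset.powerset_univ] at h2
  rw [← h2]
  by_cases hxy : x = y
  · subst hxy
    simp only [if_true]
    have : ∀ i : Fin n, sgn x i * sgn x i + 1 = 2 := by
      intro i; rw [sgn_sq]; norm_num
    rw [Finset.prod_congr rfl (fun i _ => this i), Finset.prod_const,
      Finset.card_univ, Fintype.card_fin]
  · simp only [hxy, if_false]
    obtain ⟨i, hi⟩ : ∃ i, x i ≠ y i := by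
      by_contra hc
      push_neg at hc
      exact hxy (funext hc)
    refine Finset.prod_eq_zero (Finset.mem_univ i) ?_
    cases hx : x i <;> cases hy : y i <;>
      first
        | exact absurd (hx.trans hy.symm) hi
        | (simp [sgn, hx, hy])

lemma exists_nonzero_fourier (f : (Fin n → Bool) → ℤ) (y : Fin n → Bool) (hy : f y ≠ 0) :
    ∃ S : Finset (Fin n), ∑ x : Fin n → Bool, f x * chi S x ≠ 0 := by
  by_contra hc
  push_neg at hc
  have h0 : ∑ S : Finset (Fin n), chi S y * ∑ x : Fin n → Bool, f x * chi S x = 0 := by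
    simp [hc]
  have h1 : ∑ S : Finset (Fin n), chi S y * ∑ x : Fin n → Bool, f x * chi S x
      = ∑ x : Fin n → Bool, f x * ∑ S : Finset (Fin n), chi S x * chi S y := by
    simp only [Finset.mul_sum]
    rw [Finset.sum_comm]
    refine Finset.sum_congr rfl fun x _ => Finset.sum_congr rfl fun S _ => by ring
  have h2 : ∑ x : Fin n → Bool, f x * ∑ S : Finset (Fin n), chi S x * chi S y
      = f y * 2^n := by
    simp only [orth, mul_ite, mul_zero]
    rw [Finset.sum_ite_eq' Finset.univ y (fun x => f x * 2^n)]
    simp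
  rw [h1, h2] at h0
  have : f y = 0 := by
    have h2n : (2:ℤ)^n ≠ 0 := by positivity
    exact (mul_eq_zero.mp h0).resolve_right h2n
  exact hy this

end DTAux

open DTAux

/-- Two distinct functions, each computable by a decision tree of depth at most
`d`, differ on at least `2 ^ (n - d)` points; equivalently, for uniformly
random `x`, `Pr[g x ≠ h x] ≥ 1 / 2 ^ d`. -/
theorem stmt2 {n d : ℕ} (g h : (Fin n → Bool) → Bool)
    (Tg Th : DTree n) (hg : ∀ x, Tg.eval x = g x) (hh : ∀ x, Th.eval x = h x)
    (hgd : Tg.depth ≤ d) (hhd : Th.depth ≤ d) (hne : g ≠ h) :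
    2 ^ n ≤ (Finset.univ.filter (fun x : Fin n → Bool => g x ≠ h x)).card * 2 ^ d := by
  classical
  set f : (Fin n → Bool) → ℤ := fun x => ind (g x) - ind (h x) with hf
  obtain ⟨y, hy⟩ := Function.ne_iff.mp hne
  have hfy : f y ≠ 0 := by
    simp only [hf]
    cases hgy : g y <;> cases hhy : h y <;> simp_all [ind]
  obtain ⟨S, hS⟩ := exists_nonzero_fourier f y hfy
  have d1 := gran Tg d hgd S
  have d2 := gran Th d hhd S
  simp only [hg] at d1
  simp only [hh] at d2
  have hsplit : ∑ x : Fin n → Bool, f x * chi S x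
      = (∑ x : Fin n → Bool, ind (g x) * chi S x)
        - ∑ x : Fin n → Bool, ind (h x) * chi S x := by
    rw [← Finset.sum_sub_distrib]
    exact Finset.sum_congr rfl fun x _ => by simp [hf]; ring
  have hdvd : (2:ℤ)^(n-d) ∣ ∑ x : Fin n → Bool, f x * chi S x := by
    rw [hsplit]; exact dvd_sub d1 d2
  have habs : (2:ℤ)^(n-d) ≤ |∑ x : Fin n → Bool, f x * chi S x| :=
    Int.le_of_dvd (abs_pos.mpr hS) ((dvd_abs _ _).mpr hdvd)
  set D := Finset.univ.filter (fun x : Fin n → Bool => g x ≠ h x) with hD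
  have hbound : |∑ x : Fin n → Bool, f x * chi S x| ≤ (D.card : ℤ) := by
    calc |∑ x : Fin n → Bool, f x * chi S x|
        ≤ ∑ x : Fin n → Bool, |f x * chi S x| := Finset.abs_sum_le_sum_abs _ _
      _ = ∑ x : Fin n → Bool, |f x| := by
          refine Finset.sum_congr rfl fun x _ => ?_
          rw [abs_mul]
          have : |chi S x| = 1 := by
            rw [chi, Finset.abs_prod]
            refine Finset.prod_eq_one fun i _ => ?_
            cases hx : x i <;> simp [sgn, hx]
          rw [this, mul_one]
      _ = ∑ x : Fin n → Bool, (if g x ≠ h x then (1:ℤ) else 0) := by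
          refine Finset.sum_congr rfl fun x _ => ?_
          cases hgx : g x <;> cases hhx : h x <;> simp [hf, ind, hgx, hhx]
      _ = (D.card : ℤ) := by
          rw [hD, Finset.card_filter]
          push_cast
          simp
  have hcard : 2^(n-d) ≤ D.card := by
    have : ((2:ℤ)^(n-d)) ≤ (D.card : ℤ) := le_trans habs hbound
    exact_mod_cast this
  calc 2^n ≤ 2^((n-d)+d) := Nat.pow_le_pow_right (by norm_num) (by omega)
    _ = 2^(n-d) * 2^d := pow_add 2 (n-d) d
    _ ≤ D.card * 2^d := Nat.mul_le_mul_right _ hcard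
end

section
/- Let f : {0,1}^n → {0,1} be computable by a decision tree of depth at most d, d ≥ 1, and let M = x_{i_1}⋯x_{i_{d'}} with d' ≤ d be a maximal monomial of the multilinear polynomial representation of f over F₂. Then for every choice of bits ξ_1,…,ξ_{d'} ∈ {0,1}, the restriction f_{|x_{i_1}←ξ_1,…,x_{i_{d'}}←ξ_{d'}} is computable by a decision tree of depth at most d−1. -/
/-- Evaluation of a multilinear monomial (a set of variables) at a point. -/
def evalMono {n : ℕ} (M : Finset (Fin n)) (x : Fin n → Bool) : Bool :=
  decide (∀ i ∈ M, x i = true)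

/-- Evaluation at `x` of the multilinear polynomial over `F₂` whose set of
monomials is `S` (sum modulo 2 of the monomials of `S`). -/
def polyEval {n : ℕ} (S : Finset (Finset (Fin n))) (x : Fin n → Bool) : Bool :=
  decide ((S.filter (fun M => evalMono M x = true)).card % 2 = 1)

/-- `S` is the (unique) multilinear `F₂`-polynomial representation of `f`:
the polynomial with monomial set `S` computes `f` everywhere. -/
def Represents {n : ℕ} (S : Finset (Finset (Fin n))) (f : (Fin n → Bool) → Bool) : Prop :=
  ∀ x, polyEval S x = f x

/-- The restriction of `f` obtained by substituting, for each `i ∈ A`, the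
value `ξ i` for the variable `x_i`. -/
def restrictSet {n : ℕ} (f : (Fin n → Bool) → Bool) (A : Finset (Fin n))
    (ξ : Fin n → Bool) : (Fin n → Bool) → Bool :=
  fun x => f (fun i => if i ∈ A then ξ i else x i)

/-!
Write `D_M f (z) ∈ 𝔽₂` for the parity of `f` on the subcube through `z` spanned by the coordinates
in `M`. It is `𝔽₂`-linear in `f`, and `D_M x^C` vanishes unless `M ⊆ C` (the subcube then pairs
up along a coordinate of `M \ C`), while `D_M x^M ≡ 1`. Hence for a maximal monomial `M` of `f`
we get `D_M f ≡ 1`, and this survives fixing any variable outside `M`.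

Now read the tree top-down. A query to a variable of `M` is answered by `ξ` and disappears. A query
to `x_i ∉ M` is kept, and both branches, restricted to `x_i = b`, still satisfy `D_M ≡ 1`, so they
shrink by induction. For `M ≠ ∅` no leaf can satisfy `D_M ≡ 1`, so every branch shrinks by at
least one. For `M = ∅`, `D_∅ f = f ≡ 1`.
-/

section

open Finset

variable {n : ℕ}

def subcubeParity (f : (Fin n → Bool) → Bool) (M : Finset (Fin n)) (z : Fin n → Bool) : ZMod 2 :=
  ∑ B ∈ M.powerset, ((restrictSet f M (fun i => decide (i ∈ B)) z).toNat : ZMod 2)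

lemma restrictSet_restrictSet_of_disjoint {f : (Fin n → Bool) → Bool} {A M : Finset (Fin n)}
    (h : Disjoint A M) (η ξ x : Fin n → Bool) :
    restrictSet (restrictSet f A η) M ξ x =
      restrictSet f M ξ (fun i => if i ∈ A then η i else x i) := by
  unfold restrictSet
  congr 1
  funext i
  by_cases hA : i ∈ A
  · simp [hA, Finset.disjoint_left.mp h hA]
  · simp [hA]

lemma subcubeParity_empty (f : (Fin n → Bool) → Bool) (z : Fin n → Bool) :
    subcubeParity f ∅ z = ((f z).toNat : ZMod 2) := by
  simp [subcubeParity, restrictSet]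

lemma subcubeParity_restrictSet_of_disjoint {f : (Fin n → Bool) → Bool} {A M : Finset (Fin n)}
    (h : Disjoint A M) (η z : Fin n → Bool) :
    subcubeParity (restrictSet f A η) M z =
      subcubeParity f M (fun i => if i ∈ A then η i else z i) := by
  simp only [subcubeParity, restrictSet_restrictSet_of_disjoint h]

lemma subcubeParity_eq_zero_of_forall_update_eq {f : (Fin n → Bool) → Bool}
    {M : Finset (Fin n)} {m : Fin n} (hm : m ∈ M)
    (hf : ∀ x b, f (Function.update x m b) = f x) (z : Fin n → Bool) :
    subcubeParity f M z = 0 := by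
  set g : Finset (Fin n) → ZMod 2 :=
    fun B => ((restrictSet f M (fun i => decide (i ∈ B)) z).toNat : ZMod 2) with hg
  have hm' : m ∉ M.erase m := notMem_erase m M
  have hpair : ∀ B ∈ (M.erase m).powerset, g (insert m B) = g B := by
    intro B hB
    have hmB : m ∉ B := fun h => hm' (mem_powerset.mp hB h)
    have hpt : (fun i => if i ∈ M then decide (i ∈ insert m B) else z i) =
        Function.update (fun i => if i ∈ M then decide (i ∈ B) else z i) m true := by
      funext i
      by_cases him : i = m
      · subst him; simp [hm]
      · simp [him]
    simp only [hg, restrictSet, hpt, hf]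
  have hsplit := sum_powerset_insert hm' g
  rw [insert_erase hm, sum_congr rfl hpair, CharTwo.add_self_eq_zero] at hsplit
  exact hsplit

lemma polyEval_toNat_cast (S : Finset (Finset (Fin n))) (x : Fin n → Bool) :
    ((polyEval S x).toNat : ZMod 2) = ∑ C ∈ S, ((evalMono C x).toNat : ZMod 2) := by
  have hparity (k : ℕ) : (decide (k % 2 = 1)).toNat = k % 2 := by
    rcases Nat.mod_two_eq_zero_or_one k with h | h <;> simp [h]
  rw [polyEval, hparity, ZMod.natCast_mod, natCast_card_filter]
  exact sum_congr rfl fun C _ => by cases evalMono C x <;> rfl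

lemma subcubeParity_polyEval (S : Finset (Finset (Fin n))) (M : Finset (Fin n))
    (z : Fin n → Bool) :
    subcubeParity (polyEval S) M z = ∑ C ∈ S, subcubeParity (evalMono C) M z := by
  simp only [subcubeParity, restrictSet, polyEval_toNat_cast]
  exact sum_comm

lemma subcubeParity_evalMono_self (M : Finset (Fin n)) (z : Fin n → Bool) :
    subcubeParity (evalMono M) M z = 1 := by
  rw [subcubeParity, sum_eq_single_of_mem M (mem_powerset_self M)]
  · simp +contextual [restrictSet, evalMono]
  · intro B hB hBM
    have hMB : ¬ M ⊆ B := fun h => hBM (subset_antisymm (mem_powerset.mp hB) h)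
    simp only [restrictSet, evalMono]
    rw [decide_eq_false fun h => hMB fun i hi => by simpa [hi] using h i hi]
    rfl

lemma subcubeParity_evalMono_of_not_subset {C M : Finset (Fin n)} (h : ¬ M ⊆ C)
    (z : Fin n → Bool) : subcubeParity (evalMono C) M z = 0 := by
  obtain ⟨m, hmM, hmC⟩ := not_subset.mp h
  refine subcubeParity_eq_zero_of_forall_update_eq hmM (fun x b => ?_) z
  simp only [evalMono]
  congr 1
  exact propext <| forall₂_congr fun i hi => by rw [Function.update_of_ne (ne_of_mem_of_not_mem hi hmC)]

lemma subcubeParity_eq_one_of_maximal {S : Finset (Finset (Fin n))}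
    {f : (Fin n → Bool) → Bool} (hS : Represents S f) {M : Finset (Fin n)} (hM : M ∈ S)
    (hmax : ∀ M' ∈ S, M' ≠ M → ¬ M ⊆ M') (z : Fin n → Bool) :
    subcubeParity f M z = 1 := by
  have hf : polyEval S = f := funext hS
  rw [← hf, subcubeParity_polyEval, sum_eq_single_of_mem M hM
    fun C hC hCM => subcubeParity_evalMono_of_not_subset (hmax C hC hCM) z]
  exact subcubeParity_evalMono_self M z

namespace DTree

def restrict : DTree n → Finset (Fin n) → (Fin n → Bool) → DTree n
  | leaf b, _, _ => leaf b
  | node i t0 t1, A, ξ =>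
    if i ∈ A then (if ξ i then restrict t1 A ξ else restrict t0 A ξ)
    else node i (restrict t0 A ξ) (restrict t1 A ξ)

theorem eval_restrict (T : DTree n) (A : Finset (Fin n)) (ξ x : Fin n → Bool) :
    (T.restrict A ξ).eval x = restrictSet T.eval A ξ x := by
  induction T with
  | leaf b => rfl
  | node i t0 t1 ih0 ih1 =>
    by_cases hi : i ∈ A
    · cases h : ξ i <;> simp [restrict, eval, restrictSet, hi, h, ih0, ih1]
    · cases h : x i <;> simp [restrict, eval, restrictSet, hi, h, ih0, ih1]

theorem depth_restrict_le (T : DTree n) (A : Finset (Fin n)) (ξ : Fin n → Bool) :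
    (T.restrict A ξ).depth ≤ T.depth := by
  induction T with
  | leaf b => rfl
  | node i t0 t1 ih0 ih1 =>
    by_cases hi : i ∈ A
    · simp only [restrict, hi, if_true, depth]
      split_ifs <;> omega
    · simp only [restrict, hi, if_false, depth]
      omega

theorem depth_restrict_node_le_of_mem {i : Fin n} {A : Finset (Fin n)} (hi : i ∈ A)
    (t0 t1 : DTree n) (ξ : Fin n → Bool) :
    ((node i t0 t1).restrict A ξ).depth ≤ max t0.depth t1.depth := by
  have h0 := depth_restrict_le t0 A ξ
  have h1 := depth_restrict_le t1 A ξ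
  simp only [restrict, hi, if_true]
  split_ifs <;> omega

end DTree

open DTree

lemma exists_depth_lt_restrictSet_eval {M : Finset (Fin n)} (hM : M.Nonempty)
    (ξ : Fin n → Bool) : ∀ T : DTree n, (∀ z, subcubeParity T.eval M z = 1) →
      ∃ T' : DTree n, T'.depth < T.depth ∧ T'.eval = restrictSet T.eval M ξ
  | leaf b, hf => by
    obtain ⟨m, hm⟩ := hM
    have h0 := subcubeParity_eq_zero_of_forall_update_eq (f := (leaf b).eval) hm
      (fun _ _ => rfl) (fun _ => b)
    exact (zero_ne_one (h0.symm.trans (hf _))).elim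
  | node i t0 t1, hf => by
    by_cases hi : i ∈ M
    · exact ⟨(node i t0 t1).restrict M ξ,
        (depth_restrict_node_le_of_mem hi t0 t1 ξ).trans_lt (by simp only [depth]; omega),
        funext (eval_restrict _ M ξ)⟩
    · have hdisj : Disjoint {i} M := disjoint_singleton_left.mpr hi
      have hsub (b : Bool) : ∃ U : DTree n, U.depth < max t0.depth t1.depth ∧
          U.eval = restrictSet (restrictSet (node i t0 t1).eval {i} fun _ => b) M ξ := by
        have hb := (node i t0 t1).eval_restrict {i} fun _ => b
        obtain ⟨U, hU, hUeval⟩ := exists_depth_lt_restrictSet_eval hM ξ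
          ((node i t0 t1).restrict {i} fun _ => b) fun z => by
            rw [funext hb, subcubeParity_restrictSet_of_disjoint hdisj]
            exact hf _
        refine ⟨U, hU.trans_le (depth_restrict_node_le_of_mem (mem_singleton_self i) _ _ _), ?_⟩
        rw [hUeval, funext hb]
      choose U hU hUeval using hsub
      have hU0 := hU false
      have hU1 := hU true
      refine ⟨node i (U false) (U true), by simp only [depth]; omega, funext fun x => ?_⟩
      have hx : (fun j => if j ∈ ({i} : Finset (Fin n)) then x i else x j) = x := by
        funext j
        split_ifs with hj <;> simp_all
      calc (node i (U false) (U true)).eval x = (U (x i)).eval x := by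
            cases h : x i <;> simp [eval, h]
        _ = restrictSet (node i t0 t1).eval M ξ x := by
            rw [hUeval, restrictSet_restrictSet_of_disjoint hdisj, hx]
termination_by T => T.depth
decreasing_by
  exact (depth_restrict_node_le_of_mem (mem_singleton_self i) _ _ _).trans_lt
    (by simp only [depth]; omega)

end

theorem stmt3_general {n d : ℕ} (f : (Fin n → Bool) → Bool)
    (T : DTree n) (hT : ∀ x, T.eval x = f x) (hdepth : T.depth ≤ d)
    (S : Finset (Finset (Fin n))) (hS : Represents S f)
    (M : Finset (Fin n)) (hM : M ∈ S)
    (hmax : ∀ M' ∈ S, M' ≠ M → ¬ M ⊆ M')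
    (ξ : Fin n → Bool) :
    ∃ T' : DTree n, T'.depth ≤ d - 1 ∧ ∀ x, T'.eval x = restrictSet f M ξ x := by
  have hparity := subcubeParity_eq_one_of_maximal hS hM hmax
  obtain rfl : T.eval = f := funext hT
  rcases M.eq_empty_or_nonempty with rfl | hne
  · refine ⟨.leaf true, Nat.zero_le _, fun x => ?_⟩
    have hx := subcubeParity_empty T.eval x ▸ hparity x
    cases h : T.eval x <;> simp_all [restrictSet, DTree.eval]
  · obtain ⟨T', hlt, hT'⟩ := exists_depth_lt_restrictSet_eval hne ξ T hparity
    exact ⟨T', by omega, congrFun hT'⟩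

/-- If `f` is computable by a decision tree of depth at most `d ≥ 1` and `M`
is a maximal monomial of its `F₂`-polynomial representation (with at most `d`
variables), then substituting any values for the variables of `M` yields a
function computable by a decision tree of depth at most `d - 1`. -/
theorem stmt3 {n d : ℕ} (hd : 1 ≤ d) (f : (Fin n → Bool) → Bool)
    (T : DTree n) (hT : ∀ x, T.eval x = f x) (hdepth : T.depth ≤ d)
    (S : Finset (Finset (Fin n))) (hS : Represents S f)
    (M : Finset (Fin n)) (hM : M ∈ S) (hMcard : M.card ≤ d)
    (hmax : ∀ M' ∈ S, M' ≠ M → ¬ M ⊆ M')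
    (ξ : Fin n → Bool) :
    ∃ T' : DTree n, T'.depth ≤ d - 1 ∧ ∀ x, T'.eval x = restrictSet f M ξ x :=
  stmt3_general f T hT hdepth S hS M hM hmax ξ
end

section
/- Let f : {0,1}^n → {0,1} be a non-constant function computable by a decision tree of depth at most d, d ≥ 1, and let t be the number of non-constant monomials in the multilinear polynomial representation of f over F₂. Then there is a variable x_i that appears in at least ⌈t/d⌉ of these non-constant monomials. -/
/-- Variables queried along the path followed by input `x`. -/
def pathVars {n : ℕ} : DTree n → (Fin n → Bool) → Finset (Fin n)
  | .leaf _, _ => ∅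
  | .node i t0 t1, x => insert i (if x i then pathVars t1 x else pathVars t0 x)

lemma pathVars_card_le {n : ℕ} (T : DTree n) (x : Fin n → Bool) :
    (pathVars T x).card ≤ T.depth := by
  induction T with
  | leaf b => simp [pathVars, DTree.depth]
  | node i t0 t1 ih0 ih1 =>
    simp only [pathVars, DTree.depth]
    calc (insert i (if x i then pathVars t1 x else pathVars t0 x)).card
        ≤ (if x i then pathVars t1 x else pathVars t0 x).card + 1 :=
          Finset.card_insert_le _ _
      _ ≤ 1 + max (t0.depth) (t1.depth) := by
          split <;> omega
    
lemma eval_agree {n : ℕ} (T : DTree n) (x y : Fin n → Bool)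
    (h : ∀ j ∈ pathVars T x, y j = x j) : T.eval y = T.eval x := by
  induction T with
  | leaf b => rfl
  | node i t0 t1 ih0 ih1 =>
    have hi : y i = x i := h i (Finset.mem_insert_self _ _)
    simp only [DTree.eval, hi]
    by_cases hx : x i
    · simp only [hx, if_true]
      exact ih1 fun j hj => h j (by simp [pathVars, hx, Finset.mem_insert, hj])
    · simp only [hx, if_false]
      exact ih0 fun j hj => h j (by simp [pathVars, hx, Finset.mem_insert, hj])

/-- If a non-constant `f` is computable by a decision tree of depth at most
`d ≥ 1` and its `F₂`-polynomial representation has `t` non-constant monomials,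
then some variable appears in at least `⌈t / d⌉` of these monomials. -/
theorem stmt7 {n d : ℕ} (hd : 1 ≤ d) (f : (Fin n → Bool) → Bool)
    (hnc : ¬ ∃ b : Bool, ∀ x, f x = b)
    (T : DTree n) (hT : ∀ x, T.eval x = f x) (hdepth : T.depth ≤ d)
    (S : Finset (Finset (Fin n))) (hS : Represents S f) :
    ∃ i : Fin n,
      ((S.filter (fun M => M.Nonempty)).card + d - 1) / d ≤
        (S.filter (fun M => M.Nonempty ∧ i ∈ M)).card := by
  classical
  set x0 : Fin n → Bool := fun _ => false with hx0
  set H : Finset (Fin n) := pathVars T x0 with hH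
  have hHcard : H.card ≤ d := le_trans (pathVars_card_le T x0) hdepth
  -- f is constant on inputs vanishing on H
  have hconst : ∀ x : Fin n → Bool, (∀ j ∈ H, x j = false) → f x = f x0 := by
    intro x hx
    rw [← hT x, ← hT x0]
    exact eval_agree T x0 x hx
  -- Every nonempty monomial of S intersects H
  have hhit : ∀ M ∈ S, M.Nonempty → ∃ j ∈ M, j ∈ H := by
    by_contra hcon
    push_neg at hcon
    obtain ⟨M0, hM0S, hM0ne, hM0d⟩ := hcon
    -- take minimal-cardinality counterexample
    obtain ⟨M, hM, hMmin⟩ := Finset.exists_min_image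
      (S.filter (fun M => M.Nonempty ∧ ∀ j ∈ M, j ∉ H)) Finset.card
      ⟨M0, by simp only [Finset.mem_filter]; exact ⟨hM0S, hM0ne, hM0d⟩⟩
    rw [Finset.mem_filter] at hM
    obtain ⟨hMS, hMne, hMd⟩ := hM
    set x1 : Fin n → Bool := fun j => decide (j ∈ M) with hx1
    have hx1H : ∀ j ∈ H, x1 j = false := by
      intro j hj
      simp only [hx1, decide_eq_false_iff_not]
      intro hjM
      exact hMd j hjM hj
    have hfx1 : f x1 = f x0 := hconst x1 hx1H
    have hpe : polyEval S x1 = polyEval S x0 := by rw [hS, hS]; exact hfx1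
    -- compute the two filters
    have hf0 : S.filter (fun N => evalMono N x0 = true) = S.filter (fun N => N = ∅) := by
      apply Finset.filter_congr
      intro N _
      simp only [evalMono, hx0, decide_eq_true_eq]
      constructor
      · intro h
        rcases Finset.eq_empty_or_nonempty N with h' | ⟨j, hj⟩
        · simpa using h'
        · exact absurd (h j hj) (by simp)
      · intro h; subst h; simp
    have hf1 : S.filter (fun N => evalMono N x1 = true) =
        S.filter (fun N => N = ∅) ∪ {M} := by
      ext N
      simp only [Finset.mem_union, Finset.mem_filter, Finset.mem_singleton]
      constructor
      · rintro ⟨hNS, hNe⟩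
        simp only [evalMono, hx1, decide_eq_true_eq] at hNe
        have hNM : N ⊆ M := fun j hj => by simpa using hNe j hj
        rcases Finset.eq_empty_or_nonempty N with h' | hne
        · exact Or.inl ⟨hNS, h'⟩
        · right
          have hNmem : N ∈ S.filter (fun K => K.Nonempty ∧ ∀ j ∈ K, j ∉ H) := by
            rw [Finset.mem_filter]
            exact ⟨hNS, hne, fun j hj => hMd j (hNM hj)⟩
          have := hMmin N hNmem
          exact Finset.eq_of_subset_of_card_le hNM (le_trans this (le_refl _)) |>.symm ▸
            (Finset.eq_of_subset_of_card_le hNM this).symm ▸ rfl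
      · rintro (⟨hNS, h⟩ | h)
        · subst h; refine ⟨hNS, ?_⟩; simp [evalMono]
        · subst h
          refine ⟨hMS, ?_⟩
          simp [evalMono, hx1]
    have hMnotin : M ∉ S.filter (fun N => N = ∅) := by
      simp only [Finset.mem_filter]
      rintro ⟨-, h⟩
      exact hMne.ne_empty h
    have hcard1 : (S.filter (fun N => evalMono N x1 = true)).card =
        (S.filter (fun N => N = ∅)).card + 1 := by
      rw [hf1, Finset.card_union_of_disjoint (by simp [hMnotin])]
      simp
    rw [polyEval, polyEval, hf0, hcard1] at hpe
    simp only [decide_eq_decide] at hpe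
    omega
  -- t ≥ 1
  set t := (S.filter (fun M => M.Nonempty)).card with ht
  have htpos : 1 ≤ t := by
    by_contra h
    have hempty : S.filter (fun M => M.Nonempty) = ∅ := by
      rw [← Finset.card_eq_zero]; omega
    apply hnc
    refine ⟨f x0, fun x => ?_⟩
    rw [← hS x, ← hS x0]
    have key : ∀ y : Fin n → Bool,
        S.filter (fun N => evalMono N y = true) = S.filter (fun N => N = ∅) := by
      intro y
      apply Finset.filter_congr
      intro N hNS
      have hNempty : N = ∅ := by
        by_contra hne
        have : N ∈ S.filter (fun M => M.Nonempty) := by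
          rw [Finset.mem_filter]
          exact ⟨hNS, Finset.nonempty_iff_ne_empty.mpr hne⟩
        rw [hempty] at this
        exact absurd this (Finset.notMem_empty N)
      subst hNempty
      simp [evalMono]
    rw [polyEval, polyEval, key x, key x0]
  -- pigeonhole over H
  have hsum : t ≤ ∑ i ∈ H, (S.filter (fun M => M.Nonempty ∧ i ∈ M)).card := by
    have : ∀ i : Fin n, S.filter (fun M => M.Nonempty ∧ i ∈ M) =
        (S.filter (fun M => M.Nonempty)).filter (fun M => i ∈ M) := by
      intro i; rw [Finset.filter_filter]
    calc t = ∑ M ∈ S.filter (fun M => M.Nonempty), 1 := by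
            rw [Finset.sum_const, smul_eq_mul, mul_one]
      _ ≤ ∑ M ∈ S.filter (fun M => M.Nonempty), (H.filter (fun i => i ∈ M)).card := by
            apply Finset.sum_le_sum
            intro M hM
            rw [Finset.mem_filter] at hM
            obtain ⟨j, hjM, hjH⟩ := hhit M hM.1 hM.2
            rw [Nat.one_le_iff_ne_zero, ← Nat.pos_iff_ne_zero, Finset.card_pos]
            exact ⟨j, Finset.mem_filter.mpr ⟨hjH, hjM⟩⟩
      _ = ∑ i ∈ H, ((S.filter (fun M => M.Nonempty)).filter (fun M => i ∈ M)).card := by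
            simp only [Finset.card_filter]
            rw [Finset.sum_comm]
      _ = ∑ i ∈ H, (S.filter (fun M => M.Nonempty ∧ i ∈ M)).card := by
            apply Finset.sum_congr rfl
            intro i _
            rw [this i]
  have hHne : H.Nonempty := by
    obtain ⟨M, hM⟩ := Finset.card_pos.mp (by omega : 0 < t)
    rw [Finset.mem_filter] at hM
    obtain ⟨j, _, hjH⟩ := hhit M hM.1 hM.2
    exact ⟨j, hjH⟩
  have hmaxex : ∃ i ∈ H, ∀ j ∈ H,
      (S.filter (fun M => M.Nonempty ∧ j ∈ M)).card ≤
        (S.filter (fun M => M.Nonempty ∧ i ∈ M)).card :=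
    Finset.exists_max_image H (fun j => (S.filter (fun M => M.Nonempty ∧ j ∈ M)).card) hHne
  obtain ⟨i, hiH, hmax⟩ := hmaxex
  refine ⟨i, ?_⟩
  have h1 : t ≤ H.card * (S.filter (fun M => M.Nonempty ∧ i ∈ M)).card := by
    calc t ≤ ∑ j ∈ H, (S.filter (fun M => M.Nonempty ∧ j ∈ M)).card := hsum
      _ ≤ H.card • (S.filter (fun M => M.Nonempty ∧ i ∈ M)).card :=
          Finset.sum_le_card_nsmul _ _ _ hmax
      _ = H.card * _ := by rw [smul_eq_mul]
  have h2 : t ≤ d * (S.filter (fun M => M.Nonempty ∧ i ∈ M)).card :=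
    le_trans h1 (Nat.mul_le_mul_right _ hHcard)
  rw [Nat.div_le_iff_le_mul_add_pred (by omega)]
  omega
end

section
/- Let f : {0,1}^n → {0,1} be a non-constant Boolean function with constant-depth cd(f) ≤ ℓ, where ℓ ≥ 1. Then there is a variable x_i that appears in at least a 1/ℓ fraction of the non-constant monomials of the multilinear polynomial representation of f over F₂. -/
/-- If a multilinear `F₂` polynomial is a constant function, it has no
nonempty monomial. -/
lemma const_no_nonempty {n : ℕ} (S : Finset (Finset (Fin n))) (b : Bool)
    (h : ∀ x, polyEval S x = b) : ∀ M ∈ S, ¬ M.Nonempty := by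
  by_contra hc
  push_neg at hc
  obtain ⟨M₀, hM₀S, hM₀ne⟩ := hc
  set T := S.filter (fun M => M.Nonempty) with hT
  have hTne : T.Nonempty := ⟨M₀, by simp [hT, hM₀S, hM₀ne]⟩
  obtain ⟨M, hMT, hmin⟩ := T.exists_min_image Finset.card hTne
  have hMS : M ∈ S := (Finset.mem_filter.mp hMT).1
  have hMne : M.Nonempty := (Finset.mem_filter.mp hMT).2
  have key : S.filter (fun N => evalMono N (fun i => decide (i ∈ M)) = true)
      = insert M (S.filter (fun N => N = ∅)) := by
    ext N
    simp only [Finset.mem_filter, Finset.mem_insert, evalMono, decide_eq_true_eq]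
    constructor
    · rintro ⟨hNS, hsub⟩
      have hsub' : N ⊆ M := fun i hi => by simpa using hsub i hi
      by_cases hNe : N = ∅
      · exact Or.inr ⟨hNS, hNe⟩
      · have hNne : N.Nonempty := Finset.nonempty_iff_ne_empty.mpr hNe
        have hcard : M.card ≤ N.card := hmin N (Finset.mem_filter.mpr ⟨hNS, hNne⟩)
        exact Or.inl (Finset.eq_of_subset_of_card_le hsub' hcard)
    · rintro (rfl | ⟨hNS, rfl⟩)
      · exact ⟨hMS, fun i hi => by simp [hi]⟩
      · exact ⟨hNS, by simp⟩
  have key0 : S.filter (fun N => evalMono N (fun _ => false) = true)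
      = S.filter (fun N => N = ∅) := by
    apply Finset.filter_congr
    intro N _
    simp [evalMono, Finset.eq_empty_iff_forall_notMem]
  have hMnot : M ∉ S.filter (fun N => N = ∅) := by
    simp only [Finset.mem_filter, not_and]
    intro _ hEq
    exact hMne.ne_empty hEq
  have hcard1 : (S.filter (fun N => evalMono N (fun i => decide (i ∈ M)) = true)).card
      = (S.filter (fun N => N = ∅)).card + 1 := by
    rw [key, Finset.card_insert_of_notMem hMnot]
  have h1 := h (fun i => decide (i ∈ M))
  have h0 := h (fun _ => false)
  rw [polyEval, hcard1] at h1
  rw [polyEval, key0] at h0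
  rw [← h0] at h1
  simp only [decide_eq_decide] at h1
  omega

/-- If `f` is non-constant and some set of at most `ℓ` variables can be set to
`0` to make `f` constant (`cd(f) ≤ ℓ`, `ℓ ≥ 1`), then some variable appears in
at least a `1/ℓ` fraction of the non-constant monomials of the `F₂`-polynomial
representation of `f`. -/
theorem stmt8 {n ℓ : ℕ} (hℓ : 1 ≤ ℓ) (f : (Fin n → Bool) → Bool)
    (hnc : ¬ ∃ b : Bool, ∀ x, f x = b)
    (hcd : ∃ X : Finset (Fin n), X.card ≤ ℓ ∧
      ∃ b : Bool, ∀ x : Fin n → Bool, f (fun i => if i ∈ X then false else x i) = b)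
    (S : Finset (Finset (Fin n))) (hS : Represents S f) :
    ∃ i : Fin n,
      (S.filter (fun M => M.Nonempty)).card ≤
        ℓ * (S.filter (fun M => M.Nonempty ∧ i ∈ M)).card := by
  obtain ⟨X, hXcard, b, hb⟩ := hcd
  -- X is nonempty, else f is constant
  have hXne : X.Nonempty := by
    rcases Finset.eq_empty_or_nonempty X with rfl | h
    · exfalso
      exact hnc ⟨b, fun x => by simpa using hb x⟩
    · exact h
  -- the restricted polynomial
  set S₀ := S.filter (fun M => ∀ i ∈ M, i ∉ X) with hS₀
  have hrestr : ∀ x, polyEval S₀ x = b := by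
    intro x
    have hfilter : S₀.filter (fun M => evalMono M x = true)
        = S.filter (fun M => evalMono M (fun i => if i ∈ X then false else x i) = true) := by
      rw [hS₀, Finset.filter_filter]
      apply Finset.filter_congr
      intro M _
      simp only [evalMono, decide_eq_true_eq]
      constructor
      · rintro ⟨hdisj, hx⟩ i hi
        rw [if_neg (hdisj i hi)]
        exact hx i hi
      · intro hall
        constructor
        · intro i hi hiX
          have := hall i hi
          rw [if_pos hiX] at this
          exact absurd this (by simp)
        · intro i hi
          have := hall i hi
          rwa [if_neg] at this
          intro hiX
          rw [if_pos hiX] at this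
          exact absurd this (by simp)
    have h1 : polyEval S₀ x = polyEval S (fun i => if i ∈ X then false else x i) := by
      rw [polyEval, polyEval, hfilter]
    rw [h1, hS, hb]
  have hmeet : ∀ M ∈ S, M.Nonempty → ∃ i ∈ X, i ∈ M := by
    intro M hM hMne
    by_contra hno
    push_neg at hno
    have hM₀ : M ∈ S₀ := by
      rw [hS₀, Finset.mem_filter]
      exact ⟨hM, fun i hi hiX => hno i hiX hi⟩
    exact const_no_nonempty S₀ b hrestr M hM₀ hMne
  -- pigeonhole
  have hsub : S.filter (fun M => M.Nonempty) ⊆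
      X.biUnion (fun i => S.filter (fun M => M.Nonempty ∧ i ∈ M)) := by
    intro M hM
    rw [Finset.mem_filter] at hM
    obtain ⟨i, hiX, hiM⟩ := hmeet M hM.1 hM.2
    exact Finset.mem_biUnion.mpr ⟨i, hiX, Finset.mem_filter.mpr ⟨hM.1, hM.2, hiM⟩⟩
  have hsum : (S.filter (fun M => M.Nonempty)).card ≤ ∑ i ∈ X, (S.filter (fun M => M.Nonempty ∧ i ∈ M)).card :=
    le_trans (Finset.card_le_card hsub) (Finset.card_biUnion_le)
  have hex : ∃ i₀ ∈ X, ∀ i ∈ X,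
      (S.filter (fun M => M.Nonempty ∧ i ∈ M)).card ≤
        (S.filter (fun M => M.Nonempty ∧ i₀ ∈ M)).card :=
    X.exists_max_image (fun i => (S.filter (fun M => M.Nonempty ∧ i ∈ M)).card) hXne
  obtain ⟨i₀, hi₀X, hmax⟩ := hex
  refine ⟨i₀, ?_⟩
  calc (S.filter (fun M => M.Nonempty)).card ≤ ∑ i ∈ X, (S.filter (fun M => M.Nonempty ∧ i ∈ M)).card := hsum
    _ ≤ ∑ _i ∈ X, (S.filter (fun M => M.Nonempty ∧ i₀ ∈ M)).card :=
        Finset.sum_le_sum (fun i hi => hmax i hi)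
    _ = X.card * (S.filter (fun M => M.Nonempty ∧ i₀ ∈ M)).card := by
        rw [Finset.sum_const, smul_eq_mul]
    _ ≤ ℓ * (S.filter (fun M => M.Nonempty ∧ i₀ ∈ M)).card :=
        Nat.mul_le_mul_right _ hXcard
end

section
/- Let U ⊆ {0,1}^n be an (n,2d)-universal set and let f_1, f_2 : {0,1}^n → {0,1} each be computable by a decision tree of depth at most d. If f_1(a) = f_2(a) for every a ∈ U, then f_1(x) = f_2(x) for all x ∈ {0,1}^n. -/
namespace DTree

/-- Set of variables queried along the path followed by `x`. -/
def path {n : ℕ} : DTree n → (Fin n → Bool) → Finset (Fin n)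
  | leaf _, _ => ∅
  | node i t0 t1, x => insert i (if x i then path t1 x else path t0 x)

lemma path_card_le_depth {n : ℕ} (T : DTree n) (x : Fin n → Bool) :
    (T.path x).card ≤ T.depth := by
  induction T with
  | leaf b => simp [path, depth]
  | node i t0 t1 ih0 ih1 =>
    simp only [path, depth]
    rcases h : x i with _ | _ <;>
      simp only [h, Bool.false_eq_true, if_false, if_true]
    · have := Finset.card_insert_le i (path t0 x); omega
    · have := Finset.card_insert_le i (path t1 x); omega

lemma eval_eq_of_agree {n : ℕ} (T : DTree n) (x a : Fin n → Bool)
    (h : ∀ i ∈ T.path x, a i = x i) : T.eval a = T.eval x := by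
  induction T with
  | leaf b => rfl
  | node i t0 t1 ih0 ih1 =>
    have hi : a i = x i := h i (by simp [path])
    simp only [eval, hi]
    rcases hx : x i with _ | _ <;>
      simp only [hx, Bool.false_eq_true, if_false, if_true]
    · exact ih0 fun j hj => h j (by simp [path, hx, hj])
    · exact ih1 fun j hj => h j (by simp [path, hx, hj])

end DTree

/-- If `U` is an `(n, 2d)`-universal set (every pattern on every set of at most
`2d` coordinates is realized by some element of `U`) and two functions
computable by decision trees of depth at most `d` agree on `U`, then they are
equal everywhere. -/
theorem stmt10 {n d : ℕ} (U : Finset (Fin n → Bool))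
    (hU : ∀ A : Finset (Fin n), A.card ≤ 2 * d →
      ∀ ξ : Fin n → Bool, ∃ a ∈ U, ∀ i ∈ A, a i = ξ i)
    (f₁ f₂ : (Fin n → Bool) → Bool)
    (T₁ T₂ : DTree n) (h₁ : ∀ x, T₁.eval x = f₁ x) (h₂ : ∀ x, T₂.eval x = f₂ x)
    (hd₁ : T₁.depth ≤ d) (hd₂ : T₂.depth ≤ d)
    (hagree : ∀ a ∈ U, f₁ a = f₂ a) :
    ∀ x, f₁ x = f₂ x := by
  intro x
  obtain ⟨a, haU, ha⟩ := hU (T₁.path x ∪ T₂.path x)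
    (le_trans (Finset.card_union_le _ _)
      (by have := T₁.path_card_le_depth x; have := T₂.path_card_le_depth x; omega)) x
  have e1 : f₁ a = f₁ x := by
    rw [← h₁, ← h₁]
    exact T₁.eval_eq_of_agree x a fun i hi => ha i (Finset.mem_union_left _ hi)
  have e2 : f₂ a = f₂ x := by
    rw [← h₂, ← h₂]
    exact T₂.eval_eq_of_agree x a fun i hi => ha i (Finset.mem_union_right _ hi)
  rw [← e1, ← e2, hagree a haU]
end

section
/- (Occam's Razor) Let D be a probability distribution on {0,1}^n, let H be a finite nonempty set of Boolean functions on {0,1}^n, let f : {0,1}^n → {0,1}, let ε, δ ∈ (0,1), and let m be an integer with m ≥ (1/ε)(ln|H| + ln(1/δ)). Draw x_1,…,x_m independently according to D. Then with probability at least 1−δ, every h ∈ H with h(x_i) = f(x_i) for all i ∈ [m] satisfies Pr_{x∼D}[h(x) ≠ f(x)] ≤ ε. -/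
open Finset Real

/-!
A fixed hypothesis `h` whose error exceeds `ε` agrees with `f` on a single sample point with
probability below `1 - ε ≤ exp (-ε)`, hence on all `m` independent points with probability below
`exp (-ε m)`. A union bound over the at most `|H|` such hypotheses bounds the probability that
some bad hypothesis survives by `|H| exp (-ε m)`, which the choice of `m` makes at most `δ`.
-/

theorem Finset.sum_biUnion_le_of_nonneg {ι β M : Type*} [DecidableEq β] [AddCommMonoid M]
    [PartialOrder M] [IsOrderedAddMonoid M] {s : Finset ι} {t : ι → Finset β} {f : β → M}
    (hf : ∀ x, 0 ≤ f x) : ∑ x ∈ s.biUnion t, f x ≤ ∑ i ∈ s, ∑ x ∈ t i, f x := by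
  have hunion : s.biUnion t = (s.sigma t).image Sigma.snd := by
    ext x; simp
  rw [hunion, sum_sigma']
  exact sum_image_le_of_nonneg fun x _ => hf x

section Sampling

variable {α β : Type*} [Fintype α] [DecidableEq β] {D : α → ℝ} {m : ℕ}

theorem sum_prod_eq_one (hD1 : ∑ x, D x = 1) : ∑ xs : Fin m → α, ∏ i, D (xs i) = 1 := by
  rw [← Fintype.sum_pow, hD1, one_pow]

theorem sum_prod_consistent_le_exp (hD0 : ∀ x, 0 ≤ D x) (hD1 : ∑ x, D x = 1)
    {h f : α → β} {ε : ℝ} (hfar : ε < ∑ x with h x ≠ f x, D x) :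
    ∑ xs : Fin m → α with ∀ i, h (xs i) = f (xs i), ∏ i, D (xs i) ≤ exp (-(ε * m)) := by
  have hconsistent : ({xs : Fin m → α | ∀ i, h (xs i) = f (xs i)} : Finset _) =
      Fintype.piFinset fun _ => {x | h x = f x} := by
    ext xs; simp [Fintype.mem_piFinset]
  have hagree : ∑ x with h x = f x, D x ≤ exp (-ε) := by
    have := sum_filter_add_sum_filter_not univ (fun x => h x = f x) D
    linarith [one_sub_le_exp_neg ε]
  rw [hconsistent, ← sum_pow', ← neg_mul, mul_comm, exp_nat_mul]
  exact pow_le_pow_left₀ (sum_nonneg fun x _ => hD0 x) hagree m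

open Classical in
theorem sum_prod_exists_far_consistent_le (hD0 : ∀ x, 0 ≤ D x) (hD1 : ∑ x, D x = 1)
    (H : Finset (α → β)) (f : α → β) (ε : ℝ) :
    ∑ xs : Fin m → α with
        ∃ h ∈ H, (∀ i, h (xs i) = f (xs i)) ∧ ε < ∑ x with h x ≠ f x, D x,
      ∏ i, D (xs i) ≤ #H * exp (-(ε * m)) := by
  set far := H.filter fun h => ε < ∑ x with h x ≠ f x, D x
  set consistent := fun h : α → β => ({xs : Fin m → α | ∀ i, h (xs i) = f (xs i)} : Finset _)
  have hcover : ({xs | ∃ h ∈ H, (∀ i, h (xs i) = f (xs i)) ∧ ε < ∑ x with h x ≠ f x, D x} :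
      Finset (Fin m → α)) ⊆ far.biUnion consistent := by
    intro xs hxs
    obtain ⟨h, hH, hcons, hfar⟩ := (mem_filter.1 hxs).2
    exact mem_biUnion.2 ⟨h, mem_filter.2 ⟨hH, hfar⟩, mem_filter.2 ⟨mem_univ _, hcons⟩⟩
  have hweight : ∀ xs : Fin m → α, 0 ≤ ∏ i, D (xs i) := fun xs => prod_nonneg fun i _ => hD0 _
  calc _ ≤ ∑ xs ∈ far.biUnion consistent, ∏ i, D (xs i) :=
        sum_le_sum_of_subset_of_nonneg hcover fun xs _ _ => hweight xs
    _ ≤ ∑ h ∈ far, ∑ xs ∈ consistent h, ∏ i, D (xs i) := sum_biUnion_le_of_nonneg hweight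
    _ ≤ ∑ _h ∈ far, exp (-(ε * m)) :=
        sum_le_sum fun h hh => sum_prod_consistent_le_exp hD0 hD1 (mem_filter.1 hh).2
    _ ≤ #H * exp (-(ε * m)) := by
        rw [sum_const, nsmul_eq_mul]
        gcongr
        exact filter_subset _ _

end Sampling

theorem card_mul_exp_neg_le {N ε δ : ℝ} {m : ℕ} (hN : 0 < N) (hε : 0 < ε) (hδ : 0 < δ)
    (hm : (1 / ε) * (log N + log (1 / δ)) ≤ m) : N * exp (-(ε * m)) ≤ δ := by
  have hlog : log (N / δ) ≤ ε * m := by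
    rw [log_div hN.ne' hδ.ne', sub_eq_add_neg, ← log_inv, ← one_div]
    rwa [one_div_mul_eq_div, div_le_iff₀' hε] at hm
  have := (log_le_iff_le_exp (by positivity)).1 hlog
  rw [div_le_iff₀ hδ] at this
  rw [exp_neg, ← div_eq_mul_inv, div_le_iff₀ (exp_pos _)]
  linarith

open Classical in
/-- Occam's Razor: if `m ≥ (1/ε)(ln |H| + ln (1/δ))` samples are drawn i.i.d.
from `D`, then with probability at least `1 - δ` every `h ∈ H` consistent with
`f` on the sample satisfies `Pr_{x ∼ D}[h x ≠ f x] ≤ ε`. -/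
theorem stmt11 {n m : ℕ} (D : (Fin n → Bool) → ℝ) (hD0 : ∀ x, 0 ≤ D x)
    (hD1 : ∑ x, D x = 1)
    (H : Finset ((Fin n → Bool) → Bool)) (hH : H.Nonempty)
    (f : (Fin n → Bool) → Bool) (ε δ : ℝ)
    (hε : ε ∈ Set.Ioo (0 : ℝ) 1) (hδ : δ ∈ Set.Ioo (0 : ℝ) 1)
    (hm : (1 / ε) * (Real.log (H.card : ℝ) + Real.log (1 / δ)) ≤ (m : ℝ)) :
    1 - δ ≤
      ∑ xs ∈ Finset.univ.filter (fun xs : Fin m → (Fin n → Bool) =>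
          ∀ h ∈ H, (∀ i, h (xs i) = f (xs i)) →
            (∑ x ∈ Finset.univ.filter (fun x => h x ≠ f x), D x) ≤ ε),
        ∏ i, D (xs i) := by
  obtain ⟨hε0, -⟩ := hε
  obtain ⟨hδ0, -⟩ := hδ
  have hbad := (sum_prod_exists_far_consistent_le (m := m) hD0 hD1 H f ε).trans
    (card_mul_exp_neg_le (by exact_mod_cast hH.card_pos) hε0 hδ0 hm)
  have hsplit := sum_filter_add_sum_filter_not univ
    (fun xs : Fin m → (Fin n → Bool) => ∀ h ∈ H, (∀ i, h (xs i) = f (xs i)) →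
      (∑ x ∈ Finset.univ.filter (fun x => h x ≠ f x), D x) ≤ ε)
    (fun xs => ∏ i, D (xs i))
  simp only [not_forall, not_le, exists_prop] at hsplit
  rw [sum_prod_eq_one hD1] at hsplit
  linarith
end

section
/- Let t_1,…,t_s be terms over x_1,…,x_n and let T = t_1 + t_2 + ⋯ + t_s, the sum modulo 2 of their multilinear polynomial representations over F₂. Let L ≥ K ≥ 1 be integers and suppose that for every i ∈ [s] with |t_i| > L one has |t_i^+| ≥ K. Then the number of monomials of the multilinear polynomial representation of T that have fewer than K variables is at most s·2^L. -/
/-- The term with positive variables `P` and negated variables `N`, evaluated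
at `x`. -/
def termEval {n : ℕ} (P N : Finset (Fin n)) (x : Fin n → Bool) : Bool :=
  decide (∀ i ∈ P, x i = true) && decide (∀ i ∈ N, x i = false)

/-!
Over `F₂` the monomial set of a multilinear polynomial is determined by the function it
computes: a nonzero polynomial does not vanish at the indicator vector of a minimal monomial.
Hence the monomials of `T` are the symmetric difference (`oddCover`) of the monomial sets
`{P ∪ S | S ⊆ N}` of its terms. A term with `|t| > L` has at least `K` positive variables, all
of them in each of its monomials, so every monomial of `T` with fewer than `K` variables comes
from a term with `|N| ≤ |t| ≤ L`, and such a term has at most `2 ^ |N| ≤ 2 ^ L` monomials.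
-/

open Finset
open scoped symmDiff

section OddCover

variable {α ι : Type*} [DecidableEq α]

def oddCover (I : Finset ι) (F : ι → Finset α) : Finset α :=
  {a ∈ I.biUnion F | Odd #{i ∈ I | a ∈ F i}}

theorem filter_oddCover_subset (I : Finset ι) (F : ι → Finset α) (p : α → Prop)
    [DecidablePred p] : {a ∈ oddCover I F | p a} ⊆ I.biUnion fun i => {a ∈ F i | p a} := by
  intro a
  simp only [oddCover, mem_filter, mem_biUnion]
  aesop

namespace CharTwo

variable {R : Type*} [Semiring R] [CharP R 2]

theorem sum_symmDiff (S T : Finset α) (f : α → R) :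
    ∑ a ∈ S ∆ T, f a = ∑ a ∈ S, f a + ∑ a ∈ T, f a := by
  rw [symmDiff_eq_sup_sdiff_inf]
  calc ∑ a ∈ (S ∪ T) \ (S ∩ T), f a
      = ∑ a ∈ (S ∪ T) \ (S ∩ T), f a + (∑ a ∈ S ∩ T, f a + ∑ a ∈ S ∩ T, f a) := by
        rw [add_self_eq_zero, add_zero]
    _ = ∑ a ∈ S ∪ T, f a + ∑ a ∈ S ∩ T, f a := by
        rw [← add_assoc, sum_sdiff inter_subset_union]
    _ = ∑ a ∈ S, f a + ∑ a ∈ T, f a := sum_union_inter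

theorem sum_oddCover (I : Finset ι) (F : ι → Finset α) (f : α → R) :
    ∑ a ∈ oddCover I F, f a = ∑ i ∈ I, ∑ a ∈ F i, f a := by
  rw [sum_comm' (t' := I.biUnion F) (s' := fun a => {i ∈ I | a ∈ F i}) (by aesop)]
  simp only [sum_const, nsmul_eq_mul, natCast_eq_ite, ite_mul, zero_mul, one_mul, oddCover,
    sum_filter, ← Nat.not_even_iff_odd, ite_not]

end CharTwo

end OddCover

section Terms

variable {α : Type*} [DecidableEq α]

def termMonomials (P N : Finset α) : Finset (Finset α) :=
  N.powerset.image (P ∪ ·)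

theorem card_filter_termMonomials_card_lt_le {P N : Finset α} {K L : ℕ}
    (h : L < #P + #N → K ≤ #P) : #{M ∈ termMonomials P N | #M < K} ≤ 2 ^ L := by
  by_cases hlong : L < #P + #N
  · have hempty : {M ∈ termMonomials P N | #M < K} = ∅ := by
      refine filter_eq_empty_iff.2 fun M hM => ?_
      obtain ⟨S, -, rfl⟩ := mem_image.1 hM
      have := card_le_card (subset_union_left : P ⊆ P ∪ S)
      have := h hlong
      omega
    simp [hempty]
  · calc #{M ∈ termMonomials P N | #M < K}
        ≤ #(termMonomials P N) := card_filter_le _ _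
      _ ≤ #N.powerset := card_image_le
      _ = 2 ^ #N := card_powerset N
      _ ≤ 2 ^ L := Nat.pow_le_pow_right two_pos (by omega)

end Terms

section PolyVal

variable {n : ℕ}

def polyVal (S : Finset (Finset (Fin n))) (x : Fin n → Bool) : ZMod 2 :=
  ∑ M ∈ S, if evalMono M x = true then 1 else 0

theorem polyVal_eq_natCast_of_polyEval_eq {S : Finset (Finset (Fin n))} {x : Fin n → Bool}
    {c : ℕ} (h : polyEval S x = decide (c % 2 = 1)) : polyVal S x = c := by
  rw [polyVal, ← natCast_card_filter, ZMod.natCast_eq_natCast_iff']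
  simp only [polyEval, decide_eq_decide] at h
  omega

theorem evalMono_decide_mem_iff_subset (M M' : Finset (Fin n)) :
    evalMono M' (fun i => decide (i ∈ M)) = true ↔ M' ⊆ M := by
  simp [evalMono, subset_iff]

theorem eq_empty_of_forall_polyVal_eq_zero {S : Finset (Finset (Fin n))}
    (h : ∀ x, polyVal S x = 0) : S = ∅ := by
  by_contra hS
  obtain ⟨M, hM⟩ := exists_minimal (nonempty_iff_ne_empty.2 hS)
  have hfilter : {M' ∈ S | evalMono M' (fun i => decide (i ∈ M)) = true} = {M} := by
    ext M'
    simp only [mem_filter, mem_singleton, evalMono_decide_mem_iff_subset]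
    exact ⟨fun ⟨hM', hsub⟩ => hM.eq_of_le hM' hsub, by rintro rfl; exact ⟨hM.prop, subset_rfl⟩⟩
  simpa [polyVal, ← natCast_card_filter, hfilter] using h fun i => decide (i ∈ M)

theorem eq_of_forall_polyVal_eq {S T : Finset (Finset (Fin n))}
    (h : ∀ x, polyVal S x = polyVal T x) : S = T := by
  rw [← symmDiff_eq_bot]
  refine eq_empty_of_forall_polyVal_eq_zero fun x => ?_
  rw [polyVal, CharTwo.sum_symmDiff, ← polyVal, ← polyVal, h, CharTwo.add_self_eq_zero]

theorem polyVal_termMonomials {P N : Finset (Fin n)} (hPN : Disjoint P N) (x : Fin n → Bool) :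
    polyVal (termMonomials P N) x = if termEval P N x = true then 1 else 0 := by
  set v : Fin n → ZMod 2 := fun i => if x i = true then 1 else 0
  have hmono (M : Finset (Fin n)) :
      (if evalMono M x = true then 1 else 0 : ZMod 2) = ∏ i ∈ M, v i := by
    simp [v, evalMono, prod_boole]
  have hinj : Set.InjOn (P ∪ ·) N.powerset := by
    intro S₁ h₁ S₂ h₂ he
    rw [mem_coe, mem_powerset] at h₁ h₂
    rw [← union_sdiff_cancel_left (hPN.mono_right h₁),
      ← union_sdiff_cancel_left (hPN.mono_right h₂)]
    exact congrArg (· \ P) he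
  have hneg (i : Fin n) : 1 + v i = if x i = false then 1 else 0 := by
    simp only [v]
    cases x i <;> decide
  rw [polyVal, termMonomials, sum_image hinj]
  simp only [hmono]
  rw [sum_congr rfl fun S hS => prod_union (hPN.mono_right (mem_powerset.1 hS)), ← mul_sum,
    ← prod_one_add, prod_congr rfl fun i _ => hneg i, prod_boole, prod_boole,
    ite_zero_mul_ite_zero, mul_one]
  simp [termEval]

end PolyVal

theorem stmt14_general {n s L K : ℕ}
    (P N : Fin s → Finset (Fin n)) (hdisj : ∀ i, Disjoint (P i) (N i))
    (hterms : ∀ i, L < (P i).card + (N i).card → K ≤ (P i).card)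
    (ST : Finset (Finset (Fin n)))
    (hST : ∀ x : Fin n → Bool, polyEval ST x =
      decide ((Finset.univ.filter
        (fun i : Fin s => termEval (P i) (N i) x = true)).card % 2 = 1)) :
    (ST.filter (fun M => M.card < K)).card ≤ s * 2 ^ L := by
  have hST_eq : ST = oddCover univ fun i => termMonomials (P i) (N i) := by
    refine eq_of_forall_polyVal_eq fun x => ?_
    rw [polyVal_eq_natCast_of_polyEval_eq (hST x), natCast_card_filter, polyVal,
      CharTwo.sum_oddCover]
    exact sum_congr rfl fun i _ => (polyVal_termMonomials (hdisj i) x).symm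
  calc #{M ∈ ST | #M < K}
      ≤ #(univ.biUnion fun i => {M ∈ termMonomials (P i) (N i) | #M < K}) :=
        hST_eq ▸ card_le_card (filter_oddCover_subset _ _ _)
    _ ≤ ∑ i, #{M ∈ termMonomials (P i) (N i) | #M < K} := card_biUnion_le
    _ ≤ ∑ _i : Fin s, 2 ^ L :=
        sum_le_sum fun i _ => card_filter_termMonomials_card_lt_le (hterms i)
    _ = s * 2 ^ L := by simp

/-- Let `T = t_1 + ⋯ + t_s` (mod 2) for terms `t_i` with positive parts `P i`
and negated parts `N i`, and let `L ≥ K ≥ 1`. If every term of size `> L` has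
at least `K` positive variables, then the polynomial representation of `T` has
at most `s · 2 ^ L` monomials with fewer than `K` variables. -/
theorem stmt14 {n s L K : ℕ} (hK : 1 ≤ K) (hLK : K ≤ L)
    (P N : Fin s → Finset (Fin n)) (hdisj : ∀ i, Disjoint (P i) (N i))
    (hterms : ∀ i, L < (P i).card + (N i).card → K ≤ (P i).card)
    (ST : Finset (Finset (Fin n)))
    (hST : ∀ x : Fin n → Bool, polyEval ST x =
      decide ((Finset.univ.filter
        (fun i : Fin s => termEval (P i) (N i) x = true)).card % 2 = 1)) :
    (ST.filter (fun M => M.card < K)).card ≤ s * 2 ^ L :=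
  stmt14_general P N hdisj hterms ST hST
end

section
/- Let f : {0,1}^n → {0,1} be a Boolean function and let M = x_{i_1}⋯x_{i_k} be a monomial that is a sub-monomial of some monomial of the multilinear polynomial representation of f over F₂. Then M is a maximal monomial of f if and only if ∑_{(ξ_1,…,ξ_k) ∈ {0,1}^k} f_{|x_{i_1}←ξ_1,…,x_{i_k}←ξ_k} (sum modulo 2) is the constant function 1. -/
open Finset

section Subsets

variable {α : Type*} [DecidableEq α]

-- The decidability of the support condition is a parameter: for `α = Fin n` elaboration picks
-- `Nat.decidableForallFin`, not the generic `Fintype` instance.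
lemma card_filter_supported_eq_card_filter_powerset [Fintype α] (A : Finset α)
    (P : (α → Bool) → Prop) [DecidablePred P]
    [DecidablePred fun ξ : α → Bool => ∀ i, i ∉ A → ξ i = false] :
    #{ξ : α → Bool | (∀ i, i ∉ A → ξ i = false) ∧ P ξ} =
      #{B ∈ A.powerset | P (fun i => decide (i ∈ B))} := by
  symm
  refine card_nbij' (fun B i => decide (i ∈ B)) (fun ξ => {i ∈ A | ξ i = true}) ?_ ?_ ?_ ?_
  · intro B hB
    simp only [coe_filter, mem_powerset, Set.mem_ofPred_eq, mem_univ, true_and] at hB ⊢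
    exact ⟨fun i hi => decide_eq_false fun h => hi (hB.1 h), hB.2⟩
  · intro ξ hξ
    simp only [coe_filter, mem_powerset, Set.mem_ofPred_eq, mem_univ, true_and] at hξ ⊢
    refine ⟨filter_subset _ _, ?_⟩
    convert hξ.2 using 2 with i
    by_cases hi : i ∈ A <;> simp [hi, hξ.1]
  · intro B hB
    simp only [coe_filter, mem_powerset, Set.mem_ofPred_eq] at hB
    ext i
    simp only [mem_filter, decide_eq_true_eq, and_iff_right_iff_imp]
    exact fun h => hB.1 h
  · intro ξ hξ
    simp only [coe_filter, Set.mem_ofPred_eq, mem_univ, true_and] at hξ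
    funext i
    by_cases hi : i ∈ A <;> simp [hi, hξ.1]

lemma cast_card_filter_subset_powerset (A C : Finset α) :
    (#{B ∈ A.powerset | C ∩ A ⊆ B} : ZMod 2) = if A ⊆ C then 1 else 0 := by
  rw [← Icc_eq_filter_powerset, card_Icc_finset inter_subset_right, ← card_sdiff, Nat.cast_pow,
    Nat.cast_ofNat, show (2 : ZMod 2) = 0 from rfl]
  split_ifs with h
  · simp [sdiff_eq_empty_iff_subset.2 h]
  · exact zero_pow (card_ne_zero.2 (sdiff_nonempty.2 h))

end Subsets

section Polynomials

variable {n : ℕ}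

lemma evalMono_eq_true_iff (M : Finset (Fin n)) (x : Fin n → Bool) :
    evalMono M x = true ↔ ∀ i ∈ M, x i = true := by
  simp [evalMono]

lemma evalMono_ite_mem_eq_true_iff (M A B : Finset (Fin n)) (x : Fin n → Bool) :
    evalMono M (fun i => if i ∈ A then decide (i ∈ B) else x i) = true ↔
      M ∩ A ⊆ B ∧ evalMono (M \ A) x = true := by
  simp only [evalMono, decide_eq_true_eq, subset_iff, mem_inter, mem_sdiff, and_imp]
  grind

lemma cast_card_powerset_filter_evalMono (M A : Finset (Fin n)) (x : Fin n → Bool) :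
    (#{B ∈ A.powerset | evalMono M (fun i => if i ∈ A then decide (i ∈ B) else x i) = true}
      : ZMod 2) = if A ⊆ M ∧ evalMono (M \ A) x = true then 1 else 0 := by
  simp_rw [evalMono_ite_mem_eq_true_iff]
  by_cases hx : evalMono (M \ A) x = true
  · simp only [hx, and_true]
    exact cast_card_filter_subset_powerset A M
  · simp [hx]

lemma polyEval_eq_true_iff (S : Finset (Finset (Fin n))) (x : Fin n → Bool) :
    polyEval S x = true ↔ #{M ∈ S | evalMono M x = true} % 2 = 1 := by
  simp [polyEval]

lemma ite_polyEval_eq_sum (S : Finset (Finset (Fin n))) (x : Fin n → Bool) :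
    (if polyEval S x = true then (1 : ZMod 2) else 0) =
      ∑ M ∈ S, if evalMono M x = true then 1 else 0 := by
  simp only [← natCast_card_filter, polyEval_eq_true_iff]
  rw [← ZMod.natCast_mod]
  rcases Nat.mod_two_eq_zero_or_one #{M ∈ S | evalMono M x = true} with h | h <;> simp [h]

lemma polyEval_insert {M : Finset (Fin n)} {S : Finset (Finset (Fin n))} (hM : M ∉ S)
    (x : Fin n → Bool) : polyEval (insert M S) x = (evalMono M x ^^ polyEval S x) := by
  cases h : evalMono M x <;>
    simp [polyEval, filter_insert, h, card_insert_of_notMem (mt mem_filter.1 (hM ∘ And.left)),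
      Nat.succ_mod_two_eq_one_iff]
  rcases Nat.mod_two_eq_zero_or_one #{M ∈ S | evalMono M x = true} with hc | hc <;> simp [hc]

lemma polyEval_false (S : Finset (Finset (Fin n))) :
    polyEval S (fun _ => false) = decide (∅ ∈ S) := by
  have : {M ∈ S | evalMono M (fun _ => false) = true} = {M ∈ S | M = ∅} := by
    simp [evalMono, eq_empty_iff_forall_notMem]
  by_cases h : ∅ ∈ S <;> simp [polyEval, this, filter_eq', h]

lemma exists_polyEval_eq_true {S : Finset (Finset (Fin n))} (hS : S.Nonempty) :
    ∃ x, polyEval S x = true := by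
  obtain ⟨M, hM, hmin⟩ := S.exists_minimal hS
  refine ⟨fun i => decide (i ∈ M), ?_⟩
  have : {M' ∈ S | evalMono M' (fun i => decide (i ∈ M)) = true} = {M} := by
    ext M'
    simp only [mem_filter, evalMono_eq_true_iff, decide_eq_true_eq, mem_singleton]
    exact ⟨fun h => le_antisymm h.2 (hmin h.1 h.2), by rintro rfl; exact ⟨hM, fun _ => id⟩⟩
  simp [polyEval_eq_true_iff, this]

lemma forall_polyEval_eq_true_iff (S : Finset (Finset (Fin n))) :
    (∀ x, polyEval S x = true) ↔ S = {∅} := by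
  refine ⟨fun h => ?_, by rintro rfl x; simp [polyEval, evalMono, filter_singleton]⟩
  have hempty : ∅ ∈ S := by simpa [polyEval_false] using h (fun _ => false)
  have herase : S.erase ∅ = ∅ := by
    by_contra hne
    obtain ⟨x, hx⟩ := exists_polyEval_eq_true (nonempty_iff_ne_empty.2 hne)
    have := h x
    rw [← insert_erase hempty, polyEval_insert (notMem_erase _ _)] at this
    simp [evalMono, hx] at this
  rw [← insert_erase hempty, herase]
  rfl

end Polynomials

section Derivative

variable {n : ℕ}

-- The monomials of `∑_ξ f_{|x_A ← ξ}` when `S` represents `f`: each `M ⊇ A` contributes `M \ A`.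
def derivMonomials (S : Finset (Finset (Fin n))) (A : Finset (Fin n)) :
    Finset (Finset (Fin n)) :=
  {M ∈ S | A ⊆ M}.image (· \ A)

lemma derivMonomials_eq_singleton_empty_iff (S : Finset (Finset (Fin n))) (A : Finset (Fin n)) :
    derivMonomials S A = {∅} ↔ A ∈ S ∧ ∀ M ∈ S, M ≠ A → ¬ A ⊆ M := by
  have sdiff_eq_empty {M : Finset (Fin n)} (hAM : A ⊆ M) : M \ A = ∅ ↔ M = A := by
    rw [sdiff_eq_empty_iff_subset, subset_antisymm_iff, and_iff_left hAM]
  simp only [eq_singleton_iff_unique_mem, derivMonomials, mem_image, mem_filter, and_imp,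
    forall_exists_index]
  constructor
  · rintro ⟨⟨M, ⟨hM, hAM⟩, hM_empty⟩, hall⟩
    exact ⟨(sdiff_eq_empty hAM).1 hM_empty ▸ hM,
      fun M' hM' hne hAM' => hne ((sdiff_eq_empty hAM').1 (hall _ M' hM' hAM' rfl))⟩
  · rintro ⟨hA, hmax⟩
    refine ⟨⟨A, ⟨hA, subset_rfl⟩, (sdiff_eq_empty subset_rfl).2 rfl⟩, ?_⟩
    rintro _ M hM hAM rfl
    by_contra hne
    exact hmax M hM (mt (sdiff_eq_empty hAM).2 hne) hAM

lemma card_filter_derivMonomials (S : Finset (Finset (Fin n))) (A : Finset (Fin n))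
    (x : Fin n → Bool) :
    #{N ∈ derivMonomials S A | evalMono N x = true} =
      #{M ∈ S | A ⊆ M ∧ evalMono (M \ A) x = true} := by
  rw [derivMonomials, filter_image, filter_filter, card_image_of_injOn]
  exact (superset_injOn_sdiff A).mono fun M hM => (mem_filter.1 hM).2.1

lemma cast_card_filter_restrict_eq {f : (Fin n → Bool) → Bool} {S : Finset (Finset (Fin n))}
    (hS : Represents S f) (A : Finset (Fin n)) (x : Fin n → Bool) :
    (#{ξ : Fin n → Bool | (∀ i, i ∉ A → ξ i = false) ∧
        f (fun i => if i ∈ A then ξ i else x i) = true} : ZMod 2) =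
      #{N ∈ derivMonomials S A | evalMono N x = true} := by
  rw [card_filter_supported_eq_card_filter_powerset, card_filter_derivMonomials,
    natCast_card_filter, natCast_card_filter]
  calc ∑ B ∈ A.powerset,
        (if f (fun i => if i ∈ A then decide (i ∈ B) else x i) = true then (1 : ZMod 2) else 0)
      = ∑ B ∈ A.powerset, ∑ M ∈ S,
          if evalMono M (fun i => if i ∈ A then decide (i ∈ B) else x i) = true then 1 else 0 := by
        simp only [← hS _, ite_polyEval_eq_sum]
    _ = ∑ M ∈ S,
          (#{B ∈ A.powerset | evalMono M (fun i => if i ∈ A then decide (i ∈ B) else x i) = true}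
            : ZMod 2) := by
        rw [sum_comm]
        simp only [natCast_card_filter]
    _ = ∑ M ∈ S, if A ⊆ M ∧ evalMono (M \ A) x = true then 1 else 0 := by
        simp only [cast_card_powerset_filter_evalMono]

lemma decide_card_filter_restrict_eq_polyEval {f : (Fin n → Bool) → Bool}
    {S : Finset (Finset (Fin n))} (hS : Represents S f) (A : Finset (Fin n)) (x : Fin n → Bool) :
    decide (#{ξ : Fin n → Bool | (∀ i, i ∉ A → ξ i = false) ∧
        f (fun i => if i ∈ A then ξ i else x i) = true} % 2 = 1) =
      polyEval (derivMonomials S A) x := by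
  rw [polyEval, (ZMod.natCast_eq_natCast_iff' _ _ 2).1 (cast_card_filter_restrict_eq hS A x)]

end Derivative

theorem stmt17_general {n : ℕ} (f : (Fin n → Bool) → Bool)
    (S : Finset (Finset (Fin n))) (hS : Represents S f)
    (A : Finset (Fin n)) :
    (A ∈ S ∧ ∀ M' ∈ S, M' ≠ A → ¬ A ⊆ M') ↔
      ∀ x : Fin n → Bool,
        decide ((Finset.univ.filter (fun ξ : Fin n → Bool =>
          (∀ i, i ∉ A → ξ i = false) ∧
            f (fun i => if i ∈ A then ξ i else x i) = true)).card % 2 = 1) = true := by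
  simp only [decide_card_filter_restrict_eq_polyEval hS A]
  rw [forall_polyEval_eq_true_iff, derivMonomials_eq_singleton_empty_iff]

/-- Let `A` be a monomial that is a sub-monomial of some monomial of the
`F₂`-polynomial representation `S` of `f`. Then `A` is a maximal monomial of
`f` if and only if the sum (mod 2) of the restrictions of `f` over all
assignments to the variables of `A` is the constant function `1`. -/
theorem stmt17 {n : ℕ} (f : (Fin n → Bool) → Bool)
    (S : Finset (Finset (Fin n))) (hS : Represents S f)
    (A : Finset (Fin n)) (hsub : ∃ M' ∈ S, A ⊆ M') :
    (A ∈ S ∧ ∀ M' ∈ S, M' ≠ A → ¬ A ⊆ M') ↔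
      ∀ x : Fin n → Bool,
        decide ((Finset.univ.filter (fun ξ : Fin n → Bool =>
          (∀ i, i ∉ A → ξ i = false) ∧
            f (fun i => if i ∈ A then ξ i else x i) = true)).card % 2 = 1) = true :=
  stmt17_general f S hS A
end

section
/- Let f : {0,1}^n → {0,1} be computable by a decision tree of depth at most d, d ≥ 1, and let s = psize(f). Define the decision tree T_f recursively: if f is constant, T_f is a leaf labeled with that constant; otherwise, the root of T_f is labeled x_i for the minimum index i minimizing psize(f_{|x_i←0}), its left subtree is T_{f_{|x_i←0}} and its right subtree is T_{f_{|x_i←1}}. Then T_f computes f and has depth at most d²·ln(d·s) + 1. -/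
/-- The set of monomials of the (unique) multilinear `F₂`-polynomial
representation of `f`, via Möbius inversion over `F₂`: the monomial `M`
occurs iff `∑_{x ≤ 1_M} f(x)` is odd. -/
def monomialsOf {n : ℕ} (f : (Fin n → Bool) → Bool) : Finset (Finset (Fin n)) :=
  Finset.univ.filter (fun M : Finset (Fin n) =>
    (Finset.univ.filter (fun x : Fin n → Bool =>
      (∀ i, x i = true → i ∈ M) ∧ f x = true)).card % 2 = 1)

/-- `psize f` is the number of non-constant monomials of the multilinear
`F₂`-polynomial representation of `f`. -/
def psize {n : ℕ} (f : (Fin n → Bool) → Bool) : ℕ :=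
  ((monomialsOf f).filter (fun M => M.Nonempty)).card

/-- Substituting the value `b` for the variable `x_i` in `f`. -/
def restrict {n : ℕ} (f : (Fin n → Bool) → Bool) (i : Fin n) (b : Bool) :
    (Fin n → Bool) → Bool :=
  fun x => f (Function.update x i b)

/-- `PsizeTree f T` holds when `T` is the tree `T_f` built recursively from
`f`: a leaf labeled with the constant value if `f` is constant, and otherwise
a root labeled with the minimum index `i` minimizing `psize (f|_{x_i ← 0})`,
with left subtree `T_{f|_{x_i ← 0}}` and right subtree `T_{f|_{x_i ← 1}}`. -/
inductive PsizeTree {n : ℕ} : ((Fin n → Bool) → Bool) → DTree n → Prop where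
  | leaf (f : (Fin n → Bool) → Bool) (b : Bool) (hconst : ∀ x, f x = b) :
      PsizeTree f (DTree.leaf b)
  | node (f : (Fin n → Bool) → Bool)
      (hnc : ¬ ∃ b : Bool, ∀ x, f x = b) (i : Fin n)
      (hmin : ∀ j : Fin n, psize (restrict f i false) ≤ psize (restrict f j false))
      (hleast : ∀ j : Fin n, j < i →
        psize (restrict f i false) < psize (restrict f j false))
      (t0 t1 : DTree n)
      (h0 : PsizeTree (restrict f i false) t0)
      (h1 : PsizeTree (restrict f i true) t1) :
      PsizeTree f (DTree.node i t0 t1)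



namespace Stmt19Aux
variable {n : ℕ}

def supp (x : Fin n → Bool) : Finset (Fin n) := Finset.univ.filter (fun i => x i = true)

lemma mem_supp {x : Fin n → Bool} {i : Fin n} : i ∈ supp x ↔ x i = true := by simp [supp]

lemma supp_subset_iff {x : Fin n → Bool} {M : Finset (Fin n)} :
    supp x ⊆ M ↔ ∀ i, x i = true → i ∈ M := by
  constructor
  · intro h i hi; exact h (mem_supp.2 hi)
  · intro h i hi; exact h i (mem_supp.1 hi)

lemma eq_of_supp_eq {x y : Fin n → Bool} (h : supp x = supp y) : x = y := by
  funext i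
  have : (i ∈ supp x) ↔ (i ∈ supp y) := by rw [h]
  rw [mem_supp, mem_supp] at this
  cases hx : x i <;> cases hy : y i <;> simp [hx, hy] at this ⊢

def coeff (f : (Fin n → Bool) → Bool) (M : Finset (Fin n)) : ZMod 2 :=
  ∑ x : Fin n → Bool, if supp x ⊆ M ∧ f x = true then 1 else 0

lemma zmod2_add_self (a : ZMod 2) : a + a = 0 := by revert a; decide

theorem zmod2_cases : ∀ a : ZMod 2, a = 0 ∨ a = 1 := by decide

theorem zmod2_add_eq_one : ∀ a b : ZMod 2, a + b = 1 → a = 1 ∨ b = 1 := by decide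

lemma natCast_zmod2_eq_one_iff {m : ℕ} : ((m : ZMod 2) = 1) ↔ m % 2 = 1 := by
  have h2 : (m : ZMod 2) = ((m % 2 : ℕ) : ZMod 2) := (ZMod.natCast_mod m 2).symm
  rcases Nat.mod_two_eq_zero_or_one m with h | h <;> rw [h2, h] <;> simp <;> decide

lemma mem_monomialsOf {f : (Fin n → Bool) → Bool} {M : Finset (Fin n)} :
    M ∈ monomialsOf f ↔ coeff f M = 1 := by
  rw [monomialsOf, Finset.mem_filter]
  have hcard : coeff f M =
      ((Finset.univ.filter (fun x : Fin n → Bool =>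
        (∀ i, x i = true → i ∈ M) ∧ f x = true)).card : ZMod 2) := by
    rw [Finset.card_filter, Nat.cast_sum, coeff]
    apply Finset.sum_congr rfl
    intro x _
    by_cases h : (∀ i, x i = true → i ∈ M) ∧ f x = true
    · rw [if_pos h, if_pos ⟨supp_subset_iff.2 h.1, h.2⟩]; simp
    · rw [if_neg h, if_neg (fun hc => h ⟨supp_subset_iff.1 hc.1, hc.2⟩)]; simp
  rw [hcard, natCast_zmod2_eq_one_iff]
  simp

end Stmt19Aux

namespace Stmt19Aux
variable {n : ℕ}

lemma flip_flip (x : Fin n → Bool) (i : Fin n) :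
    Function.update (Function.update x i (!x i)) i (!(Function.update x i (!x i) i)) = x := by
  funext j
  by_cases hj : j = i
  · subst hj; simp
  · simp [Function.update_of_ne hj]

lemma sum_flip_eq_zero (i : Fin n) (g : (Fin n → Bool) → ZMod 2)
    (hg : ∀ x, g (Function.update x i (!x i)) = g x) :
    ∑ x : Fin n → Bool, g x = 0 := by
  refine Finset.sum_involution (fun x _ => Function.update x i (!x i))
    (fun x _ => by rw [hg]; exact zmod2_add_self _)
    (fun x _ _ hEq => by have := congrFun hEq i; simp at this)
    (fun x _ => Finset.mem_univ _)
    (fun x _ => flip_flip x i)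

lemma update_flip (x : Fin n → Bool) (i : Fin n) (b : Bool) :
    Function.update (Function.update x i (!x i)) i b = Function.update x i b := by
  funext j
  by_cases hj : j = i
  · subst hj; simp
  · simp [Function.update_of_ne hj]

lemma supp_update_subset {x : Fin n → Bool} {i : Fin n} {M : Finset (Fin n)} (hi : i ∈ M) :
    (supp (Function.update x i (!x i)) ⊆ M) ↔ supp x ⊆ M := by
  constructor <;> intro h j hj <;> rcases eq_or_ne j i with rfl | hne
  · exact hi
  · apply h; rw [mem_supp] at hj ⊢; rwa [Function.update_of_ne hne]
  · exact hi
  · apply h; rw [mem_supp] at hj ⊢; rwa [Function.update_of_ne hne] at hj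

lemma coeff_restrict_of_mem {f : (Fin n → Bool) → Bool} {i : Fin n} {M : Finset (Fin n)}
    (b : Bool) (hi : i ∈ M) : coeff (restrict f i b) M = 0 := by
  apply sum_flip_eq_zero i
  intro x
  by_cases h : supp x ⊆ M ∧ restrict f i b x = true
  · rw [if_pos h, if_pos]
    refine ⟨(supp_update_subset hi).2 h.1, ?_⟩
    show f _ = true
    rw [update_flip]
    exact h.2
  · rw [if_neg h, if_neg]
    intro hc
    apply h
    refine ⟨(supp_update_subset hi).1 hc.1, ?_⟩
    have h2 := hc.2
    simp only [restrict] at h2 ⊢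
    rwa [update_flip] at h2

lemma supp_notMem_false {x : Fin n → Bool} {i : Fin n} {M : Finset (Fin n)}
    (hM : i ∉ M) (hx : supp x ⊆ M) : x i = false := by
  cases h : x i
  · rfl
  · exact absurd (hx (mem_supp.2 h)) hM

lemma coeff_restrict_false {f : (Fin n → Bool) → Bool} {i : Fin n} {M : Finset (Fin n)}
    (hM : i ∉ M) : coeff (restrict f i false) M = coeff f M := by
  apply Finset.sum_congr rfl
  intro x _
  by_cases hs : supp x ⊆ M
  · have hx : x i = false := supp_notMem_false hM hs
    have : Function.update x i false = x := by
      funext j; rcases eq_or_ne j i with rfl | hne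
      · simp [hx]
      · simp [Function.update_of_ne hne]
    simp only [restrict, this]
  · rw [if_neg (fun hc => hs hc.1), if_neg (fun hc => hs hc.1)]

end Stmt19Aux

namespace Stmt19Aux
variable {n : ℕ}

lemma supp_update_true {x : Fin n → Bool} {i : Fin n} {M : Finset (Fin n)}
    (hM : i ∉ M) (hx : x i = false) :
    supp (Function.update x i true) ⊆ insert i M ↔ supp x ⊆ M := by
  constructor
  · intro h j hj
    have hjx : x j = true := mem_supp.1 hj
    have hji : j ≠ i := by rintro rfl; rw [hx] at hjx; exact Bool.false_ne_true hjx
    have : j ∈ insert i M := h (mem_supp.2 (by rwa [Function.update_of_ne hji]))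
    rcases Finset.mem_insert.1 this with rfl | h'
    · exact absurd rfl hji
    · exact h'
  · intro h j hj
    have hjx : Function.update x i true j = true := mem_supp.1 hj
    rcases eq_or_ne j i with rfl | hji
    · exact Finset.mem_insert_self _ _
    · rw [Function.update_of_ne hji] at hjx
      exact Finset.mem_insert_of_mem (h (mem_supp.2 hjx))

lemma coeff_restrict_true {f : (Fin n → Bool) → Bool} {i : Fin n} {M : Finset (Fin n)}
    (hM : i ∉ M) :
    coeff (restrict f i true) M = coeff f M + coeff f (insert i M) := by
  classical
  have h0 : coeff (restrict f i true) M =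
      ∑ x ∈ Finset.univ.filter (fun x : Fin n → Bool => x i = false),
        (if supp x ⊆ M ∧ f (Function.update x i true) = true then (1 : ZMod 2) else 0) := by
    rw [coeff]
    refine (Finset.sum_subset (Finset.subset_univ _) ?_).symm
    intro x _ hx
    simp only [Finset.mem_filter, Finset.mem_univ, true_and, Bool.not_eq_false] at hx
    have hns : ¬ (supp x ⊆ M) := fun hs => hM (hs (mem_supp.2 hx))
    exact if_neg (fun hc => hns hc.1)
  have h1 : ∑ x ∈ Finset.univ.filter (fun x : Fin n → Bool => x i = false),
        (if supp x ⊆ M ∧ f (Function.update x i true) = true then (1 : ZMod 2) else 0)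
      = ∑ y ∈ Finset.univ.filter (fun y : Fin n → Bool => y i = true),
        (if supp y ⊆ insert i M ∧ f y = true then (1 : ZMod 2) else 0) := by
    refine Finset.sum_bij' (fun x _ => Function.update x i true)
      (fun y _ => Function.update y i false) ?_ ?_ ?_ ?_ ?_
    · intro x _; simp
    · intro y _; simp
    · intro x hx
      simp only [Finset.mem_filter, Finset.mem_univ, true_and] at hx
      funext j
      rcases eq_or_ne j i with rfl | hji
      · simp [hx]
      · simp [Function.update_of_ne hji]
    · intro y hy
      simp only [Finset.mem_filter, Finset.mem_univ, true_and] at hy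
      funext j
      rcases eq_or_ne j i with rfl | hji
      · simp [hy]
      · simp [Function.update_of_ne hji]
    · intro x hx
      simp only [Finset.mem_filter, Finset.mem_univ, true_and] at hx
      by_cases hc : supp x ⊆ M ∧ f (Function.update x i true) = true
      · rw [if_pos hc, if_pos ⟨(supp_update_true hM hx).2 hc.1, hc.2⟩]
      · rw [if_neg hc, if_neg (fun hc2 => hc ⟨(supp_update_true hM hx).1 hc2.1, hc2.2⟩)]
  have h2 : (∑ y ∈ Finset.univ.filter (fun y : Fin n → Bool => y i = true),
        (if supp y ⊆ insert i M ∧ f y = true then (1 : ZMod 2) else 0))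
      + (∑ y ∈ Finset.univ.filter (fun y : Fin n → Bool => ¬ (y i = true)),
        (if supp y ⊆ insert i M ∧ f y = true then (1 : ZMod 2) else 0))
      = coeff f (insert i M) := by
    rw [coeff]
    exact Finset.sum_filter_add_sum_filter_not Finset.univ
      (fun x : Fin n → Bool => x i = true) _
  have h3 : (∑ y ∈ Finset.univ.filter (fun y : Fin n → Bool => ¬ (y i = true)),
        (if supp y ⊆ insert i M ∧ f y = true then (1 : ZMod 2) else 0)) = coeff f M := by
    have hcong : ∀ x ∈ Finset.univ.filter (fun y : Fin n → Bool => ¬ (y i = true)),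
        (if supp x ⊆ insert i M ∧ f x = true then (1 : ZMod 2) else 0)
        = (if supp x ⊆ M ∧ f x = true then (1 : ZMod 2) else 0) := by
      intro x hx
      simp only [Finset.mem_filter, Finset.mem_univ, true_and, Bool.not_eq_true] at hx
      by_cases hc : supp x ⊆ M ∧ f x = true
      · rw [if_pos ⟨fun j hj => Finset.mem_insert_of_mem (hc.1 hj), hc.2⟩, if_pos hc]
      · rw [if_neg, if_neg hc]
        intro hc2
        apply hc
        refine ⟨?_, hc2.2⟩
        intro j hj
        rcases Finset.mem_insert.1 (hc2.1 hj) with rfl | h'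
        · rw [mem_supp, hx] at hj; exact absurd hj Bool.false_ne_true
        · exact h'
    rw [Finset.sum_congr rfl hcong, coeff]
    apply Finset.sum_subset (Finset.subset_univ _)
    intro x _ hx
    simp only [Finset.mem_filter, Finset.mem_univ, true_and, Bool.not_eq_true,
      Bool.not_eq_false] at hx
    exact if_neg (fun hc => hM (hc.1 (mem_supp.2 hx)))
  have hfin : ∀ a b : ZMod 2, b + (a + b) = a := by decide
  rw [h0, h1, ← h2, ← h3, hfin]

end Stmt19Aux

namespace Stmt19Aux
variable {n : ℕ}

lemma cast_card_filter {α : Type*} (s : Finset α) (p : α → Prop) [DecidablePred p] :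
    ((s.filter p).card : ZMod 2) = ∑ a ∈ s, if p a then (1 : ZMod 2) else 0 := by
  rw [Finset.card_filter, Nat.cast_sum]
  exact Finset.sum_congr rfl fun a _ => by split <;> simp

lemma two_pow_zmod2 (k : ℕ) : ((2 ^ k : ℕ) : ZMod 2) = if k = 0 then 1 else 0 := by
  cases k with
  | zero => simp
  | succ m =>
    have : ((2 ^ (m + 1) : ℕ) : ZMod 2) = ((2 ^ m : ℕ) : ZMod 2) * ((2 : ℕ) : ZMod 2) := by
      rw [pow_succ]; push_cast; ring
    rw [this]
    have h2 : ((2 : ℕ) : ZMod 2) = 0 := by decide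
    rw [h2, mul_zero]
    simp

lemma inversion (f : (Fin n → Bool) → Bool) (x : Fin n → Bool) :
    (if f x = true then (1 : ZMod 2) else 0) = ∑ M ∈ (supp x).powerset, coeff f M := by
  classical
  have hswap : ∑ M ∈ (supp x).powerset, coeff f M
      = ∑ y : Fin n → Bool, ∑ M ∈ (supp x).powerset,
          (if supp y ⊆ M ∧ f y = true then (1 : ZMod 2) else 0) := by
    rw [Finset.sum_comm]
    rfl
  have key : ∀ y : Fin n → Bool,
      (∑ M ∈ (supp x).powerset, if supp y ⊆ M ∧ f y = true then (1 : ZMod 2) else 0)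
      = if y = x ∧ f y = true then 1 else 0 := by
    intro y
    by_cases hf : f y = true
    · simp only [hf, and_true]
      rw [← cast_card_filter]
      by_cases hsub : supp y ⊆ supp x
      · have hIcc : (supp x).powerset.filter (fun M => supp y ⊆ M)
            = Finset.Icc (supp y) (supp x) := by
          ext M
          simp only [Finset.mem_filter, Finset.mem_powerset, Finset.mem_Icc]
          exact ⟨fun h => ⟨h.2, h.1⟩, fun h => ⟨h.2, h.1⟩⟩
        rw [hIcc, Finset.card_Icc_finset hsub, two_pow_zmod2]
        by_cases heq : supp y = supp x
        · have hyx : y = x := eq_of_supp_eq heq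
          rw [heq]
          simp [hyx]
        · have hlt : (supp y).card < (supp x).card :=
            Finset.card_lt_card (Finset.ssubset_iff_subset_ne.2 ⟨hsub, heq⟩)
          have h1 : ¬ ((supp x).card - (supp y).card = 0) := by omega
          have h2 : y ≠ x := fun h => heq (by rw [h])
          rw [if_neg h1, if_neg h2]
      · have hempty : (supp x).powerset.filter (fun M => supp y ⊆ M) = ∅ := by
          ext M
          simp only [Finset.mem_filter, Finset.mem_powerset, Finset.notMem_empty,
            iff_false, not_and]
          intro h1 h2
          exact hsub (h2.trans h1)
        have h2 : y ≠ x := fun h => hsub (by rw [h])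
        rw [hempty]
        simp [h2]
    · simp [hf]
  rw [hswap, Finset.sum_congr rfl (fun y _ => key y)]
  rw [Finset.sum_eq_single_of_mem x (Finset.mem_univ x)]
  · simp
  · intro y _ hy
    rw [if_neg (fun hc => hy hc.1)]

lemma exists_const_of_coeff {f : (Fin n → Bool) → Bool}
    (h : ∀ M : Finset (Fin n), M.Nonempty → coeff f M = 0) : ∃ b, ∀ x, f x = b := by
  have hval : ∀ x, (if f x = true then (1 : ZMod 2) else 0) = coeff f ∅ := by
    intro x
    rw [inversion f x]
    apply Finset.sum_eq_single_of_mem ∅ (Finset.empty_mem_powerset _)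
    intro M _ hne
    exact h M (Finset.nonempty_iff_ne_empty.2 hne)
  refine ⟨f (fun _ => false), fun x => ?_⟩
  have h1 := hval x
  have h2 := hval (fun _ => false)
  rw [← h2] at h1
  by_cases hx : f x = true <;> by_cases hy : f (fun _ => false) = true
  · rw [hx, hy]
  · rw [if_pos hx, if_neg hy] at h1; exact absurd h1 (by decide)
  · rw [if_neg hx, if_pos hy] at h1; exact absurd h1 (by decide)
  · rw [Bool.not_eq_true] at hx hy; rw [hx, hy]

lemma coeff_const {f : (Fin n → Bool) → Bool} (hc : ∀ x y, f x = f y)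
    {M : Finset (Fin n)} (hM : M.Nonempty) : coeff f M = 0 := by
  obtain ⟨i, hi⟩ := hM
  apply sum_flip_eq_zero i
  intro x
  by_cases h : supp x ⊆ M ∧ f x = true
  · rw [if_pos h, if_pos ⟨(supp_update_subset hi).2 h.1, (hc _ _).trans h.2⟩]
  · rw [if_neg h, if_neg (fun hc2 => h ⟨(supp_update_subset hi).1 hc2.1, (hc _ _).trans hc2.2⟩)]

lemma monomialsOf_restrict_false (f : (Fin n → Bool) → Bool) (i : Fin n) :
    monomialsOf (restrict f i false) = (monomialsOf f).filter (fun M => i ∉ M) := by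
  ext M
  rw [Finset.mem_filter, mem_monomialsOf, mem_monomialsOf]
  by_cases hi : i ∈ M
  · rw [coeff_restrict_of_mem false hi]
    have : (0 : ZMod 2) ≠ 1 := by decide
    simp [hi, this]
  · rw [coeff_restrict_false hi]
    simp [hi]

end Stmt19Aux

namespace Stmt19Aux
variable {n : ℕ}

def countVar (f : (Fin n → Bool) → Bool) (i : Fin n) : ℕ :=
  ((monomialsOf f).filter (fun M => i ∈ M)).card

lemma psize_split (f : (Fin n → Bool) → Bool) (i : Fin n) :
    psize f = psize (restrict f i false) + countVar f i := by
  classical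
  rw [psize, psize, countVar, monomialsOf_restrict_false, Finset.filter_filter]
  have hsplit := Finset.card_filter_add_card_filter_not
    (s := (monomialsOf f).filter (fun M => M.Nonempty)) (fun M => i ∈ M)
  rw [Finset.filter_filter, Finset.filter_filter] at hsplit
  have h1 : ((monomialsOf f).filter (fun M => i ∉ M ∧ M.Nonempty)).card
      = ((monomialsOf f).filter (fun M => M.Nonempty ∧ ¬ i ∈ M)).card := by
    congr 1
    apply Finset.filter_congr
    intro M _
    exact ⟨fun h => ⟨h.2, h.1⟩, fun h => ⟨h.2, h.1⟩⟩
  have h2 : ((monomialsOf f).filter (fun M => i ∈ M)).card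
      = ((monomialsOf f).filter (fun M => M.Nonempty ∧ i ∈ M)).card := by
    congr 1
    apply Finset.filter_congr
    intro M _
    exact ⟨fun h => ⟨⟨i, h⟩, h⟩, fun h => h.2⟩
  omega

lemma countVar_restrict_false_le (f : (Fin n → Bool) → Bool) (r j : Fin n) :
    countVar (restrict f r false) j ≤ countVar f j := by
  rw [countVar, countVar, monomialsOf_restrict_false, Finset.filter_filter]
  apply Finset.card_le_card
  intro M hM
  rw [Finset.mem_filter] at hM ⊢
  exact ⟨hM.1, hM.2.2⟩

lemma psize_eq_zero_of_const {f : (Fin n → Bool) → Bool} (hc : ∀ x y, f x = f y) :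
    psize f = 0 := by
  rw [psize, Finset.card_eq_zero, Finset.eq_empty_iff_forall_notMem]
  intro M hM
  rw [Finset.mem_filter, mem_monomialsOf] at hM
  rw [coeff_const hc hM.2] at hM
  exact absurd hM.1 (by decide)

lemma const_of_psize_eq_zero {f : (Fin n → Bool) → Bool} (h : psize f = 0) :
    ∃ b, ∀ x, f x = b := by
  rw [psize, Finset.card_eq_zero, Finset.eq_empty_iff_forall_notMem] at h
  apply exists_const_of_coeff
  intro M hM
  rcases zmod2_cases (coeff f M) with h0 | h1
  · exact h0
  · exact absurd (Finset.mem_filter.2 ⟨mem_monomialsOf.2 h1, hM⟩) (h M)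

lemma exists_countVar_pos {f : (Fin n → Bool) → Bool} (h : ¬ ∃ b, ∀ x, f x = b) :
    ∃ j, 1 ≤ countVar f j := by
  have hps : psize f ≠ 0 := fun h0 => h (const_of_psize_eq_zero h0)
  obtain ⟨M, hM⟩ := Finset.card_pos.1 (Nat.pos_of_ne_zero hps)
  rw [Finset.mem_filter] at hM
  obtain ⟨j, hj⟩ := hM.2
  refine ⟨j, ?_⟩
  rw [countVar]
  exact Finset.card_pos.2 ⟨M, Finset.mem_filter.2 ⟨hM.1, hj⟩⟩

def restrictTree : DTree n → Fin n → Bool → DTree n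
  | DTree.leaf b, _, _ => DTree.leaf b
  | DTree.node j t0 t1, i, b =>
    if j = i then (if b then restrictTree t1 i b else restrictTree t0 i b)
    else DTree.node j (restrictTree t0 i b) (restrictTree t1 i b)

lemma restrictTree_depth (T : DTree n) (i : Fin n) (b : Bool) :
    (restrictTree T i b).depth ≤ T.depth := by
  induction T with
  | leaf c => exact le_refl _
  | node j t0 t1 ih0 ih1 =>
    rw [restrictTree]
    by_cases h : j = i
    · rw [if_pos h]
      cases b
      · rw [if_neg Bool.false_ne_true]
        exact le_trans ih0 (by rw [DTree.depth]; omega)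
      · rw [if_pos rfl]
        exact le_trans ih1 (by rw [DTree.depth]; omega)
    · rw [if_neg h, DTree.depth, DTree.depth]
      omega

lemma restrictTree_eval (T : DTree n) (i : Fin n) (b : Bool) (x : Fin n → Bool) :
    (restrictTree T i b).eval x = T.eval (Function.update x i b) := by
  induction T with
  | leaf c => rfl
  | node j t0 t1 ih0 ih1 =>
    rw [restrictTree]
    by_cases h : j = i
    · subst h
      rw [if_pos rfl, DTree.eval, Function.update_self]
      cases b
      · rw [if_neg Bool.false_ne_true, if_neg Bool.false_ne_true, ih0]
      · rw [if_pos rfl, if_pos rfl, ih1]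
    · rw [if_neg h, DTree.eval, DTree.eval, Function.update_of_ne h, ih0, ih1]

end Stmt19Aux

namespace Stmt19Aux
variable {n : ℕ}

lemma const_of_leaf {f : (Fin n → Bool) → Bool} {b : Bool}
    (hT : ∀ x, (DTree.leaf b : DTree n).eval x = f x) : ∀ x y, f x = f y := by
  intro x y
  rw [← hT x, ← hT y]
  rfl

lemma computes_restrict_false {f : (Fin n → Bool) → Bool} {r : Fin n} {t0 t1 : DTree n}
    (hT : ∀ x, (DTree.node r t0 t1).eval x = f x) :
    ∀ x, (restrictTree t0 r false).eval x = restrict f r false x := by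
  intro x
  rw [restrictTree_eval, restrict, ← hT, DTree.eval, Function.update_self]
  rw [if_neg Bool.false_ne_true]

lemma computes_restrict_true {f : (Fin n → Bool) → Bool} {r : Fin n} {t0 t1 : DTree n}
    (hT : ∀ x, (DTree.node r t0 t1).eval x = f x) :
    ∀ x, (restrictTree t1 r true).eval x = restrict f r true x := by
  intro x
  rw [restrictTree_eval, restrict, ← hT, DTree.eval, Function.update_self, if_pos rfl]

lemma card_le_depth_of_leaf {f : (Fin n → Bool) → Bool} {b : Bool}
    (hT : ∀ x, (DTree.leaf b : DTree n).eval x = f x) :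
    ∀ M ∈ monomialsOf f, M.card ≤ (DTree.leaf b : DTree n).depth := by
  intro M hM
  rcases M.eq_empty_or_nonempty with rfl | hne
  · simp [DTree.depth]
  · rw [mem_monomialsOf, coeff_const (const_of_leaf hT) hne] at hM
    exact absurd hM (by decide)

lemma deg_le_depth : ∀ (D : ℕ) (T : DTree n) (f : (Fin n → Bool) → Bool),
    T.depth ≤ D → (∀ x, T.eval x = f x) → ∀ M ∈ monomialsOf f, M.card ≤ T.depth := by
  intro D
  induction D with
  | zero =>
    intro T f hD hT M hM
    cases T with
    | leaf b => exact card_le_depth_of_leaf hT M hM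
    | node r t0 t1 => rw [DTree.depth] at hD; omega
  | succ D ih =>
    intro T f hD hT M hM
    cases T with
    | leaf b => exact card_le_depth_of_leaf hT M hM
    | node r t0 t1 =>
      rw [DTree.depth] at hD ⊢
      have hd0 : (restrictTree t0 r false).depth ≤ D :=
        le_trans (restrictTree_depth _ _ _) (by omega)
      have hd1 : (restrictTree t1 r true).depth ≤ D :=
        le_trans (restrictTree_depth _ _ _) (by omega)
      have hub0 : (restrictTree t0 r false).depth ≤ max t0.depth t1.depth :=
        le_trans (restrictTree_depth _ _ _) (le_max_left _ _)
      have hub1 : (restrictTree t1 r true).depth ≤ max t0.depth t1.depth :=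
        le_trans (restrictTree_depth _ _ _) (le_max_right _ _)
      by_cases hr : r ∈ M
      · have hrM : r ∉ M.erase r := Finset.notMem_erase r M
        have e0 : coeff (restrict f r false) (M.erase r) = coeff f (M.erase r) :=
          coeff_restrict_false hrM
        have e1 : coeff (restrict f r true) (M.erase r)
            = coeff f (M.erase r) + coeff f M := by
          rw [coeff_restrict_true hrM, Finset.insert_erase hr]
        have hcM : coeff f M = 1 := mem_monomialsOf.1 hM
        have hone : coeff (restrict f r false) (M.erase r)
            + coeff (restrict f r true) (M.erase r) = 1 := by
          rw [e0, e1, hcM]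
          have : ∀ a : ZMod 2, a + (a + 1) = 1 := by decide
          exact this _
        have hcard : (M.erase r).card = M.card - 1 := Finset.card_erase_of_mem hr
        have hMpos : 1 ≤ M.card := Finset.card_pos.2 ⟨r, hr⟩
        rcases zmod2_add_eq_one _ _ hone with h | h
        · have := ih (restrictTree t0 r false) (restrict f r false) hd0
            (computes_restrict_false hT) (M.erase r) (mem_monomialsOf.2 h)
          omega
        · have := ih (restrictTree t1 r true) (restrict f r true) hd1
            (computes_restrict_true hT) (M.erase r) (mem_monomialsOf.2 h)
          omega
      · have h0 : M ∈ monomialsOf (restrict f r false) := by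
          rw [mem_monomialsOf, coeff_restrict_false hr]
          exact mem_monomialsOf.1 hM
        have := ih (restrictTree t0 r false) (restrict f r false) hd0
          (computes_restrict_false hT) M h0
        omega

lemma psize_le_depth_mul : ∀ (D : ℕ) (T : DTree n) (f : (Fin n → Bool) → Bool),
    T.depth ≤ D → (∀ x, T.eval x = f x) → ∀ _i₀ : Fin n,
    ∃ j, psize f ≤ T.depth * countVar f j := by
  intro D
  induction D with
  | zero =>
    intro T f hD hT i₀
    cases T with
    | leaf b => exact ⟨i₀, by rw [psize_eq_zero_of_const (const_of_leaf hT)]; omega⟩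
    | node r t0 t1 => rw [DTree.depth] at hD; omega
  | succ D ih =>
    intro T f hD hT i₀
    cases T with
    | leaf b => exact ⟨i₀, by rw [psize_eq_zero_of_const (const_of_leaf hT)]; omega⟩
    | node r t0 t1 =>
      rw [DTree.depth] at hD
      have hd0 : (restrictTree t0 r false).depth ≤ D :=
        le_trans (restrictTree_depth _ _ _) (by omega)
      obtain ⟨j, hj⟩ := ih (restrictTree t0 r false) (restrict f r false) hd0
        (computes_restrict_false hT) i₀
      have hsplit := psize_split f r
      have hcv : countVar (restrict f r false) j ≤ countVar f j :=
        countVar_restrict_false_le f r j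
      have hdep : (restrictTree t0 r false).depth ≤ max t0.depth t1.depth :=
        le_trans (restrictTree_depth _ _ _) (le_max_left _ _)
      rcases le_total (countVar f j) (countVar f r) with hle | hle
      · refine ⟨r, ?_⟩
        rw [DTree.depth]
        have h1 : psize (restrict f r false)
            ≤ (max t0.depth t1.depth) * countVar f r := by
          calc psize (restrict f r false)
              ≤ (restrictTree t0 r false).depth * countVar (restrict f r false) j := hj
            _ ≤ (max t0.depth t1.depth) * countVar f r :=
                Nat.mul_le_mul hdep (le_trans hcv hle)
        have : (1 + max t0.depth t1.depth) * countVar f r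
            = (max t0.depth t1.depth) * countVar f r + countVar f r := by ring
        omega
      · refine ⟨j, ?_⟩
        rw [DTree.depth]
        have h1 : psize (restrict f r false)
            ≤ (max t0.depth t1.depth) * countVar f j := by
          calc psize (restrict f r false)
              ≤ (restrictTree t0 r false).depth * countVar (restrict f r false) j := hj
            _ ≤ (max t0.depth t1.depth) * countVar f j := Nat.mul_le_mul hdep hcv
        have : (1 + max t0.depth t1.depth) * countVar f j
            = (max t0.depth t1.depth) * countVar f j + countVar f j := by ring
        omega

end Stmt19Aux

namespace Stmt19Aux
variable {n : ℕ}

def phi (f : (Fin n → Bool) → Bool) : ℕ := ∑ M ∈ monomialsOf f, M.card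

lemma countVar_le_sum (f : (Fin n → Bool) → Bool) (r : Fin n) :
    countVar f r ≤ ∑ M ∈ (monomialsOf f).filter (fun M => r ∈ M), M.card := by
  rw [countVar]
  have := Finset.card_nsmul_le_sum ((monomialsOf f).filter (fun M => r ∈ M))
    (fun M => M.card) 1 (fun M hM => Finset.card_pos.2 ⟨r, (Finset.mem_filter.1 hM).2⟩)
  simpa using this

lemma phi_restrict_false_add (f : (Fin n → Bool) → Bool) (r : Fin n) :
    phi (restrict f r false) + ∑ M ∈ (monomialsOf f).filter (fun M => r ∈ M), M.card
      = phi f := by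
  rw [phi, phi, monomialsOf_restrict_false]
  rw [add_comm]
  exact Finset.sum_filter_add_sum_filter_not (monomialsOf f) (fun M => r ∈ M) _

lemma phi_restrict_false_le (f : (Fin n → Bool) → Bool) (r : Fin n) :
    phi (restrict f r false) + countVar f r ≤ phi f := by
  have h1 := phi_restrict_false_add f r
  have h2 := countVar_le_sum f r
  omega

lemma phi_restrict_true_le (f : (Fin n → Bool) → Bool) (r : Fin n) :
    phi (restrict f r true) + countVar f r ≤ phi f := by
  classical
  set A := (monomialsOf f).filter (fun M => r ∉ M) with hA
  set B := ((monomialsOf f).filter (fun M => r ∈ M)).image (fun M => M.erase r) with hB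
  have hsub : monomialsOf (restrict f r true) ⊆ A ∪ B := by
    intro M hM
    have h1 : coeff (restrict f r true) M = 1 := mem_monomialsOf.1 hM
    have hr : r ∉ M := by
      intro hr
      rw [coeff_restrict_of_mem true hr] at h1
      exact absurd h1 (by decide)
    rw [coeff_restrict_true hr] at h1
    rcases zmod2_add_eq_one _ _ h1 with h | h
    · exact Finset.mem_union.2 (Or.inl (Finset.mem_filter.2 ⟨mem_monomialsOf.2 h, hr⟩))
    · refine Finset.mem_union.2 (Or.inr ?_)
      rw [hB, Finset.mem_image]
      refine ⟨insert r M, Finset.mem_filter.2 ⟨mem_monomialsOf.2 h,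
        Finset.mem_insert_self r M⟩, Finset.erase_insert hr⟩
  have hphi1 : phi (restrict f r true) ≤ ∑ M ∈ A ∪ B, M.card := by
    rw [phi]
    exact Finset.sum_le_sum_of_subset hsub
  have hunion : ∑ M ∈ A ∪ B, M.card ≤ (∑ M ∈ A, M.card) + (∑ M ∈ B, M.card) := by
    have := Finset.sum_union_inter (s₁ := A) (s₂ := B) (f := fun M : Finset (Fin n) => M.card)
    omega
  have hBsum : (∑ M ∈ B, M.card) + countVar f r
      ≤ ∑ M ∈ (monomialsOf f).filter (fun M => r ∈ M), M.card := by
    have hinj : ∀ M ∈ (monomialsOf f).filter (fun M => r ∈ M),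
        ∀ N ∈ (monomialsOf f).filter (fun M => r ∈ M),
        M.erase r = N.erase r → M = N := by
      intro M hM N hN h
      have hrM : r ∈ M := (Finset.mem_filter.1 hM).2
      have hrN : r ∈ N := (Finset.mem_filter.1 hN).2
      rw [← Finset.insert_erase hrM, h, Finset.insert_erase hrN]
    rw [hB, Finset.sum_image hinj]
    have hper : ∀ M ∈ (monomialsOf f).filter (fun M => r ∈ M),
        (M.erase r).card + 1 = M.card := by
      intro M hM
      have hrM : r ∈ M := (Finset.mem_filter.1 hM).2
      have := Finset.card_erase_of_mem hrM
      have hpos : 1 ≤ M.card := Finset.card_pos.2 ⟨r, hrM⟩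
      omega
    have : ∑ M ∈ (monomialsOf f).filter (fun M => r ∈ M), ((M.erase r).card + 1)
        = ∑ M ∈ (monomialsOf f).filter (fun M => r ∈ M), M.card :=
      Finset.sum_congr rfl hper
    rw [Finset.sum_add_distrib, Finset.sum_const, smul_eq_mul, mul_one] at this
    rw [countVar]
    omega
  have hAsum := phi_restrict_false_add f r
  have hA' : ∑ M ∈ A, M.card = phi (restrict f r false) := by
    rw [phi, monomialsOf_restrict_false, hA]
  omega

lemma phi_le_mul_psize {f : (Fin n → Bool) → Bool} {d : ℕ}
    (hdeg : ∀ M ∈ monomialsOf f, M.card ≤ d) : phi f ≤ d * psize f := by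
  rw [phi, psize]
  have hsplit := Finset.sum_filter_add_sum_filter_not (monomialsOf f)
    (fun M => M.Nonempty) (fun M => M.card)
  have hzero : ∑ M ∈ (monomialsOf f).filter (fun M => ¬ M.Nonempty), M.card = 0 := by
    apply Finset.sum_eq_zero
    intro M hM
    have := (Finset.mem_filter.1 hM).2
    rw [Finset.not_nonempty_iff_eq_empty] at this
    rw [this, Finset.card_empty]
  have hle : ∑ M ∈ (monomialsOf f).filter (fun M => M.Nonempty), M.card
      ≤ ((monomialsOf f).filter (fun M => M.Nonempty)).card * d := by
    have := Finset.sum_le_card_nsmul ((monomialsOf f).filter (fun M => M.Nonempty))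
      (fun M => M.card) d
      (fun M hM => hdeg M (Finset.mem_filter.1 hM).1)
    simpa using this
  have : ((monomialsOf f).filter (fun M => M.Nonempty)).card * d
      = d * ((monomialsOf f).filter (fun M => M.Nonempty)).card := Nat.mul_comm _ _
  omega

lemma const_of_phi_eq_zero {f : (Fin n → Bool) → Bool} (h : phi f = 0) :
    ∃ b, ∀ x, f x = b := by
  apply exists_const_of_coeff
  intro M hM
  rcases zmod2_cases (coeff f M) with h0 | h1
  · exact h0
  · exfalso
    have hmem : M ∈ monomialsOf f := mem_monomialsOf.2 h1
    have hcard : M.card = 0 := by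
      rw [phi] at h
      have := Finset.sum_eq_zero_iff.1 h M hmem
      exact this
    rw [Finset.card_eq_zero] at hcard
    rw [hcard] at hM
    exact absurd hM Finset.not_nonempty_empty

end Stmt19Aux

namespace Stmt19Aux
variable {n : ℕ}

lemma exists_least_argmin {f : (Fin n → Bool) → Bool} (hne : ¬ ∃ b, ∀ x, f x = b) :
    ∃ i : Fin n, (∀ j, psize (restrict f i false) ≤ psize (restrict f j false)) ∧
      (∀ j, j < i → psize (restrict f i false) < psize (restrict f j false)) := by
  classical
  have hn : Nonempty (Fin n) := by
    by_contra hcon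
    apply hne
    refine ⟨f (fun _ => false), fun x => ?_⟩
    have : x = fun _ => false := funext fun i => absurd (Nonempty.intro i) hcon
    rw [this]
  set p : Fin n → ℕ := fun j => psize (restrict f j false) with hp
  obtain ⟨m, _, hm⟩ := Finset.exists_min_image Finset.univ p Finset.univ_nonempty
  set S := Finset.univ.filter (fun j => ∀ k, p j ≤ p k) with hS
  have hSne : S.Nonempty :=
    ⟨m, Finset.mem_filter.2 ⟨Finset.mem_univ _, fun k => hm k (Finset.mem_univ k)⟩⟩
  have hminS := (Finset.mem_filter.1 (Finset.min'_mem S hSne)).2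
  refine ⟨S.min' hSne, hminS, ?_⟩
  intro j hj
  have hjS : j ∉ S := fun hjS => absurd (Finset.min'_le S j hjS) (not_le.2 hj)
  have : ¬ ∀ k, p j ≤ p k := fun hall => hjS (Finset.mem_filter.2 ⟨Finset.mem_univ _, hall⟩)
  push_neg at this
  obtain ⟨k, hk⟩ := this
  exact lt_of_le_of_lt (hminS k) hk

lemma countVar_ge_of_hmin {f : (Fin n → Bool) → Bool} {i : Fin n}
    (hmin : ∀ j, psize (restrict f i false) ≤ psize (restrict f j false)) :
    ∀ j, countVar f j ≤ countVar f i := by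
  intro j
  have h1 := psize_split f i
  have h2 := psize_split f j
  have := hmin j
  omega

lemma exists_psizeTree : ∀ (N : ℕ) (f : (Fin n → Bool) → Bool),
    phi f ≤ N → ∃ T : DTree n, PsizeTree f T := by
  intro N
  induction N with
  | zero =>
    intro f hf
    obtain ⟨b, hb⟩ := const_of_phi_eq_zero (Nat.le_zero.1 hf)
    exact ⟨_, PsizeTree.leaf f b hb⟩
  | succ N ih =>
    intro f hf
    by_cases hc : ∃ b, ∀ x, f x = b
    · obtain ⟨b, hb⟩ := hc
      exact ⟨_, PsizeTree.leaf f b hb⟩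
    · obtain ⟨i, hmin, hleast⟩ := exists_least_argmin hc
      have hcv : 1 ≤ countVar f i := by
        obtain ⟨j, hj⟩ := exists_countVar_pos hc
        exact le_trans hj (countVar_ge_of_hmin hmin j)
      have h0 : phi (restrict f i false) ≤ N := by
        have := phi_restrict_false_le f i; omega
      have h1 : phi (restrict f i true) ≤ N := by
        have := phi_restrict_true_le f i; omega
      obtain ⟨t0, ht0⟩ := ih _ h0
      obtain ⟨t1, ht1⟩ := ih _ h1
      exact ⟨_, PsizeTree.node f hc i hmin hleast t0 t1 ht0 ht1⟩

lemma psizeTree_eval {f : (Fin n → Bool) → Bool} {T : DTree n} (h : PsizeTree f T) :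
    ∀ x, T.eval x = f x := by
  induction h with
  | leaf f b hconst => intro x; exact (hconst x).symm
  | node f hnc i hmin hleast t0 t1 h0 h1 ih0 ih1 =>
    intro x
    rw [DTree.eval]
    have hupd : Function.update x i (x i) = x := Function.update_eq_self i x
    cases hx : x i
    · rw [if_neg Bool.false_ne_true, ih0]
      show f (Function.update x i false) = f x
      rw [← hx, hupd]
    · rw [if_pos rfl, ih1]
      show f (Function.update x i true) = f x
      rw [← hx, hupd]

lemma psizeTree_depth_le (d : ℕ) (hd : 1 ≤ d) :
    ∀ (t : ℕ) (f : (Fin n → Bool) → Bool) (Tf T : DTree n),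
    PsizeTree f Tf → (∀ x, T.eval x = f x) → T.depth ≤ d →
    phi f * (d * d - 1) ^ t < (d * d) ^ t → Tf.depth ≤ t := by
  intro t
  induction t with
  | zero =>
    intro f Tf T hP hT hTd hphi
    simp only [pow_zero, mul_one] at hphi
    have hz : phi f = 0 := by omega
    have hconst := const_of_phi_eq_zero hz
    cases hP with
    | leaf f b hb => rw [DTree.depth]
    | node f hnc i hmin hleast t0 t1 h0 h1 => exact absurd hconst hnc
  | succ t ih =>
    intro f Tf T hP hT hTd hphi
    cases hP with
    | leaf f b hb => rw [DTree.depth]; omega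
    | node f hnc i hmin hleast t0 t1 h0 h1 =>
      obtain ⟨j, hj⟩ := psize_le_depth_mul d T f hTd hT i
      have hcv : countVar f j ≤ countVar f i := countVar_ge_of_hmin hmin j
      have hps : psize f ≤ d * countVar f i :=
        le_trans hj (Nat.mul_le_mul hTd hcv)
      have hdeg : ∀ M ∈ monomialsOf f, M.card ≤ d :=
        fun M hM => le_trans (deg_le_depth d T f hTd hT M hM) hTd
      have hphile : phi f ≤ d * psize f := phi_le_mul_psize hdeg
      have hkey : phi f ≤ d * d * countVar f i := by
        calc phi f ≤ d * psize f := hphile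
          _ ≤ d * (d * countVar f i) := Nat.mul_le_mul_left d hps
          _ = d * d * countVar f i := by ring
      -- generic child bound
      have hchild : ∀ (g : (Fin n → Bool) → Bool),
          phi g + countVar f i ≤ phi f → phi g * (d * d - 1) ^ t < (d * d) ^ t := by
        intro g hg
        have hAdd : phi g * (d * d) + phi f ≤ phi f * (d * d) := by
          calc phi g * (d * d) + phi f
              ≤ phi g * (d * d) + countVar f i * (d * d) := by
                have : phi f ≤ countVar f i * (d * d) := by
                  rw [Nat.mul_comm]; exact hkey
                omega
            _ = (phi g + countVar f i) * (d * d) := by ring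
            _ ≤ phi f * (d * d) := Nat.mul_le_mul_right _ hg
        have hB : phi g * (d * d) ≤ phi f * (d * d - 1) := by
          have he : phi f * (d * d - 1) + phi f = phi f * (d * d) := by
            have h1 : d * d - 1 + 1 = d * d := by have h2 := Nat.mul_le_mul hd hd; omega
            calc phi f * (d * d - 1) + phi f = phi f * ((d * d - 1) + 1) := by ring
              _ = phi f * (d * d) := by rw [h1]
          omega
        have hmulchain : (phi g * (d * d - 1) ^ t) * (d * d)
            < ((d * d) ^ t) * (d * d) := by
          calc (phi g * (d * d - 1) ^ t) * (d * d)
              = (phi g * (d * d)) * (d * d - 1) ^ t := by ring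
            _ ≤ (phi f * (d * d - 1)) * (d * d - 1) ^ t := Nat.mul_le_mul_right _ hB
            _ = phi f * (d * d - 1) ^ (t + 1) := by ring
            _ < (d * d) ^ (t + 1) := hphi
            _ = ((d * d) ^ t) * (d * d) := by ring
        exact lt_of_mul_lt_mul_right hmulchain (Nat.zero_le _)
      have hc0 : phi (restrict f i false) * (d * d - 1) ^ t < (d * d) ^ t :=
        hchild _ (phi_restrict_false_le f i)
      have hc1 : phi (restrict f i true) * (d * d - 1) ^ t < (d * d) ^ t :=
        hchild _ (phi_restrict_true_le f i)
      have hcomp0 : ∀ x, (restrictTree T i false).eval x = restrict f i false x := by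
        intro x; rw [restrictTree_eval, restrict, hT]
      have hcomp1 : ∀ x, (restrictTree T i true).eval x = restrict f i true x := by
        intro x; rw [restrictTree_eval, restrict, hT]
      have hdep0 : (restrictTree T i false).depth ≤ d :=
        le_trans (restrictTree_depth _ _ _) hTd
      have hdep1 : (restrictTree T i true).depth ≤ d :=
        le_trans (restrictTree_depth _ _ _) hTd
      have ht0 := ih (restrict f i false) t0 (restrictTree T i false) h0 hcomp0 hdep0 hc0
      have ht1 := ih (restrict f i true) t1 (restrictTree T i true) h1 hcomp1 hdep1 hc1
      rw [DTree.depth]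
      omega

lemma phi_eq_zero_of_const {f : (Fin n → Bool) → Bool} (hc : ∀ x y, f x = f y) :
    phi f = 0 := by
  rw [phi]
  apply Finset.sum_eq_zero
  intro M hM
  rcases M.eq_empty_or_nonempty with rfl | hne
  · exact Finset.card_empty
  · rw [mem_monomialsOf, coeff_const hc hne] at hM
    exact absurd hM (by decide)

end Stmt19Aux

open Stmt19Aux

/-- For `f` computable by a decision tree of depth at most `d ≥ 1` with
`s = psize f`, the recursively built tree `T_f` exists, computes `f`, and has
depth at most `d² · ln (d · s) + 1`. -/
theorem stmt19 {n d : ℕ} (hd : 1 ≤ d) (f : (Fin n → Bool) → Bool)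
    (T : DTree n) (hT : ∀ x, T.eval x = f x) (hdepth : T.depth ≤ d) :
    (∃ Tf : DTree n, PsizeTree f Tf) ∧
    ∀ Tf : DTree n, PsizeTree f Tf →
      (∀ x, Tf.eval x = f x) ∧
      (Tf.depth : ℝ) ≤ (d : ℝ) ^ 2 * Real.log ((d : ℝ) * (psize f : ℝ)) + 1 := by
  constructor
  · exact exists_psizeTree (phi f) f le_rfl
  · intro Tf hTf
    refine ⟨psizeTree_eval hTf, ?_⟩
    have hdeg : ∀ M ∈ monomialsOf f, M.card ≤ d :=
      fun M hM => le_trans (deg_le_depth d T f hdepth hT M hM) hdepth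
    by_cases hs : psize f = 0
    · have hconst := const_of_psize_eq_zero hs
      have hzero : phi f = 0 := phi_eq_zero_of_const
        (fun x y => by obtain ⟨b, hb⟩ := hconst; rw [hb x, hb y])
      have hdep := psizeTree_depth_le d hd 0 f Tf T hTf hT hdepth (by simp [hzero])
      have h0 : Tf.depth = 0 := Nat.le_zero.1 hdep
      rw [h0, hs]
      push_cast
      rw [mul_zero, Real.log_zero, mul_zero, zero_add]
      norm_num
    · have hs1 : 1 ≤ psize f := Nat.one_le_iff_ne_zero.2 hs
      set s := psize f with hsdef
      set D : ℝ := (d : ℝ) with hD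
      have hD1 : (1:ℝ) ≤ D := by rw [hD]; exact_mod_cast hd
      have hDD : (1:ℝ) ≤ D * D := by nlinarith
      have hq0 : (0:ℝ) ≤ D * D - 1 := by linarith
      have hDDpos : (0:ℝ) < D * D := by linarith
      set L : ℝ := D ^ 2 * Real.log (D * (s:ℝ)) with hL
      have hds1 : (1:ℝ) ≤ D * (s:ℝ) := by
        have h2 : (1:ℝ) ≤ (s:ℝ) := by exact_mod_cast hs1
        nlinarith
      have hdspos : (0:ℝ) < D * (s:ℝ) := lt_of_lt_of_le one_pos hds1
      have hLnn : 0 ≤ L := by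
        rw [hL]
        apply mul_nonneg (by positivity) (Real.log_nonneg hds1)
      set t : ℕ := ⌊L⌋₊ + 1 with ht
      have htgt : L < (t:ℝ) := by
        rw [ht]; push_cast; exact Nat.lt_floor_add_one L
      have hφ : phi f ≤ d * s := phi_le_mul_psize hdeg
      have hdd1 : 1 ≤ d * d := Nat.mul_le_mul hd hd
      have hreal : ((phi f : ℝ)) * (D * D - 1) ^ t < (D * D) ^ t := by
        have hqexp : D * D - 1 ≤ (D * D) * Real.exp (-(1/(D*D))) := by
          have hx := Real.add_one_le_exp (-(1/(D*D)))
          have h5 := mul_le_mul_of_nonneg_left hx (le_of_lt hDDpos)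
          calc D * D - 1 = (D*D) * (-(1/(D*D)) + 1) := by field_simp; ring
            _ ≤ (D*D) * Real.exp (-(1/(D*D))) := h5
        have hpow : (D * D - 1)^t ≤ (D*D)^t * (Real.exp (-(1/(D*D))))^t := by
          calc (D*D-1)^t ≤ ((D*D) * Real.exp (-(1/(D*D))))^t := pow_le_pow_left₀ hq0 hqexp t
            _ = (D*D)^t * (Real.exp (-(1/(D*D))))^t := mul_pow _ _ _
        have hexp : (Real.exp (-(1/(D*D))))^t = Real.exp (-((t:ℝ)/(D*D))) := by
          rw [← Real.exp_nat_mul]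
          congr 1
          field_simp
        have hphir : ((phi f : ℝ)) ≤ D * s := by
          rw [hD]; exact_mod_cast hφ
        have hkey2 : (D * s) * Real.exp (-((t:ℝ)/(D*D))) < 1 := by
          have hlog : Real.log (D * s) < (t:ℝ)/(D*D) := by
            have hsq : D^2 = D * D := pow_two D
            rw [hL, hsq] at htgt
            rw [lt_div_iff₀ hDDpos]
            nlinarith [htgt]
          have hmono : Real.exp (-((t:ℝ)/(D*D))) < Real.exp (-(Real.log (D*s))) := by
            apply Real.exp_lt_exp.2; linarith
          have hel : Real.exp (-(Real.log (D*s))) = (D*s)⁻¹ := by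
            rw [Real.exp_neg, Real.exp_log hdspos]
          calc (D*s) * Real.exp (-((t:ℝ)/(D*D)))
              < (D*s) * (D*s)⁻¹ := by
                apply mul_lt_mul_of_pos_left (by rw [← hel]; exact hmono) hdspos
            _ = 1 := mul_inv_cancel₀ (ne_of_gt hdspos)
        calc (phi f : ℝ) * (D*D-1)^t
            ≤ (D*s) * ((D*D)^t * Real.exp (-((t:ℝ)/(D*D)))) := by
              have h4 : (phi f : ℝ) * (D*D-1)^t ≤ (D*s) * (D*D-1)^t :=
                mul_le_mul_of_nonneg_right hphir (pow_nonneg hq0 t)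
              have h6 : (D*s) * (D*D-1)^t
                  ≤ (D*s) * ((D*D)^t * Real.exp (-((t:ℝ)/(D*D)))) := by
                apply mul_le_mul_of_nonneg_left _ (le_of_lt hdspos)
                rw [← hexp]; exact hpow
              linarith
          _ = ((D*s) * Real.exp (-((t:ℝ)/(D*D)))) * (D*D)^t := by ring
          _ < 1 * (D*D)^t := mul_lt_mul_of_pos_right hkey2 (pow_pos hDDpos t)
          _ = (D*D)^t := one_mul _
      have hnat : phi f * (d * d - 1) ^ t < (d * d) ^ t := by
        have hcast2 : ((phi f * (d * d - 1) ^ t : ℕ) : ℝ) = (phi f : ℝ) * (D*D - 1)^t := by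
          push_cast [Nat.cast_sub hdd1]
          ring
        have hcast3 : (((d*d)^t : ℕ) : ℝ) = (D*D)^t := by push_cast; ring
        have h7 : ((phi f * (d * d - 1) ^ t : ℕ) : ℝ) < (((d*d)^t : ℕ) : ℝ) := by
          rw [hcast2, hcast3]; exact hreal
        exact_mod_cast h7
      have hdep := psizeTree_depth_le d hd t f Tf T hTf hT hdepth hnat
      have hfloor : ((⌊L⌋₊ : ℕ) : ℝ) ≤ L := Nat.floor_le hLnn
      have hcastdep : (Tf.depth : ℝ) ≤ (t : ℝ) := by exact_mod_cast hdep
      rw [ht] at hcastdep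
      push_cast at hcastdep
      calc (Tf.depth : ℝ) ≤ (⌊L⌋₊ : ℝ) + 1 := hcastdep
        _ ≤ L + 1 := by linarith
end
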